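/- arXiv:2506.21637 — 5 statements merged into one kernel-verified Lean document; each statement's English description precedes it below -/
import Mathlib

section
/- Let r^Θ_i = b^Θ_{i,1} − b^Θ_{i,2} (so r^Θ_i = k_i for i ∈ M̃, k_i − 1 for i ∉ J₀ ∪ M̃, p − 1 for i ∈ J₀ ∩ M, and p for i ∈ J₀ ∖ M). Suppose J^Θ ⊆ ℤ/fℤ is such that for every μ ∈ M̃, either μ ∈ J^Θ and T_μ ∩ J^Θ = ∅, or μ ∉ J^Θ and T_μ ⊆ J^Θ. Then the pair (r^Θ, J^Θ) is not exceptional, i.e. it is not the case that r^Θ ∈ 𝒫′, every i with r^Θ_i ∈ {p−1, p} lies in J^Θ, and no i with r^Θ_i = 1 lies in J^Θ. -/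
open scoped Classical
noncomputable section

/-- `Σ(v) = Σ_{i=0}^{f−1} v_i · p^{f−1−i}`. -/
def Sig (p f : ℕ) (v : ZMod f → ℤ) : ℤ :=
  ∑ i ∈ Finset.range f, v (i : ZMod f) * (p : ℤ) ^ (f - 1 - i)

/-- `A_i(c,d) = Σ_{j=1}^{f} p^{f−j} · (c_{i+j} − d_{i+j})`. -/
def Ai (p f : ℕ) (c d : ZMod f → ℤ) (i : ZMod f) : ℤ :=
  ∑ j ∈ Finset.Icc 1 f, (p : ℤ) ^ (f - j) * (c (i + (j : ZMod f)) - d (i + (j : ZMod f)))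

/-- `T_ν`: the maximal run of indices with `k`-value 1 following `ν`. -/
def Trun (f : ℕ) (k : ZMod f → ℤ) (ν : ZMod f) : Set (ZMod f) :=
  {i | ∃ s : ℕ, 1 ≤ s ∧ i = ν + (s : ZMod f) ∧
        ∀ j : ℕ, 1 ≤ j → j ≤ s → k (ν + (j : ZMod f)) = 1}

/-- `b_{i,1} = k_i − 1`. -/
def b1 (f : ℕ) (k : ZMod f → ℤ) : ZMod f → ℤ := fun i => k i - 1

/-- the constantly zero second component. -/
def zero2 (f : ℕ) : ZMod f → ℤ := fun _ => 0

/-- `b′_{i,1}`. -/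
def bp1 (p f : ℕ) (k : ZMod f → ℤ) : ZMod f → ℤ := fun i =>
  if k i = 1 then (if k (i + 1) = 1 then (p : ℤ) - 1 else (p : ℤ))
  else (if k (i + 1) = 1 then k i - 2 else k i - 1)

/-- `b^μ_{i,1}`. -/
def bmu1 (p f : ℕ) (k : ZMod f → ℤ) (μ : ZMod f) : ZMod f → ℤ := fun i =>
  if i = μ then k μ - 1 else bp1 p f k i

/-- `b^μ_{i,2}`. -/
def bmu2 (f : ℕ) (μ : ZMod f) : ZMod f → ℤ := fun i => if i = μ then -1 else 0

/-- `b^Θ_{i,1}`. -/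
def bth1 (p f : ℕ) (k : ZMod f → ℤ) : ZMod f → ℤ := fun i =>
  if k i = 1 then (if k (i + 1) = 1 then (p : ℤ) - 1 else (p : ℤ)) else k i - 1

/-- `b^Θ_{i,2}`. -/
def bth2 (f : ℕ) (k : ZMod f → ℤ) : ZMod f → ℤ := fun i =>
  if k i ≠ 1 ∧ k (i + 1) = 1 then -1 else 0

/-- `s_i(c,S) = c_{i,1}` if `i ∈ S`, else `c_{i,2}`. -/
def sW (f : ℕ) (c1 c2 : ZMod f → ℤ) (S : Set (ZMod f)) : ZMod f → ℤ :=
  fun i => if i ∈ S then c1 i else c2 i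

/-- `t_i(c,S) = c_{i,2}` if `i ∈ S`, else `c_{i,1}`. -/
def tW (f : ℕ) (c1 c2 : ZMod f → ℤ) (S : Set (ZMod f)) : ZMod f → ℤ :=
  fun i => if i ∈ S then c2 i else c1 i

/-- The set `𝒫′` of Definition 3.7 of the paper. -/
def memP' (p f : ℕ) (r : ZMod f → ℤ) : Prop :=
  (∀ i, r i = 0 ∨ r i = 1 ∨ r i = (p : ℤ) - 1 ∨ r i = (p : ℤ)) ∧
  (∀ i, r i = (p : ℤ) → (r (i + 1) = 0 ∨ r (i + 1) = 1)) ∧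
  (∀ i, (r i = 1 ∨ r i = (p : ℤ) - 1) → (r (i + 1) = (p : ℤ) - 1 ∨ r (i + 1) = (p : ℤ))) ∧
  (∀ i, r i = 0 →
    ((∀ j, r j = 0) ∨
      ∃ s t : ℕ, 1 ≤ s ∧ 1 ≤ t ∧
        (∀ j : ℕ, 1 ≤ j → j ≤ s - 1 → r (i + (j : ZMod f)) = 0) ∧
        r (i + (s : ZMod f)) = 1 ∧
        (∀ j : ℕ, 1 ≤ j → j ≤ t - 1 → r (i - (j : ZMod f)) = 0) ∧
        r (i - (t : ZMod f)) = (p : ℤ)))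

/-- The exceptional case of Theorem 3.9 of the paper. -/
def Exceptional (p f : ℕ) (r : ZMod f → ℤ) (J : Set (ZMod f)) : Prop :=
  memP' p f r ∧ (∀ i, (r i = (p : ℤ) - 1 ∨ r i = (p : ℤ)) → i ∈ J) ∧
    (∀ i, r i = 1 → i ∉ J)

/-- Lemma A.13 of the paper: under the block condition on `J^Θ`, the pair `(r^Θ, J^Θ)` with
`r^Θ_i = b^Θ_{i,1} − b^Θ_{i,2}` is not exceptional. -/
theorem stmt12 (p f : ℕ) (hp : p.Prime) (hodd : Odd p) (hf : 1 ≤ f)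
    (k : ZMod f → ℤ)
    (hk : ∀ i, 1 ≤ k i ∧ k i ≤ (p : ℤ))
    (hone : ∃ i, k i = 1) (hnotone : ∃ i, k i ≠ 1)
    (h21 : ∀ i, ¬(k i = 2 ∧ k (i + 1) = 1))
    (JTh : Set (ZMod f))
    (hJTh : ∀ μ, (k μ ≠ 1 ∧ k (μ + 1) = 1) →
      (μ ∈ JTh ∧ Trun f k μ ∩ JTh = ∅) ∨ (μ ∉ JTh ∧ Trun f k μ ⊆ JTh)) :
    ¬ Exceptional p f (fun i => bth1 p f k i - bth2 f k i) JTh := by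
  intro hexc
  obtain ⟨hP, hJ1, hJ2⟩ := hexc
  haveI : NeZero f := ⟨by omega⟩
  obtain ⟨i0, hi0⟩ := hone
  obtain ⟨i1, hi1⟩ := hnotone
  have hμex : ∃ μ, k μ ≠ 1 ∧ k (μ + 1) = 1 := by
    by_contra h
    push_neg at h
    have key : ∀ n : ℕ, k (i0 - (n : ZMod f)) = 1 := by
      intro n
      induction n with
      | zero => simpa using hi0
      | succ n ih =>
        by_contra hc
        have h2 := h _ hc
        apply h2
        have heq : i0 - ((n + 1 : ℕ) : ZMod f) + 1 = i0 - (n : ZMod f) := by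
          push_cast; ring
        rw [heq]; exact ih
    have hkey := key (i0 - i1).val
    rw [show ((i0 - i1).val : ZMod f) = i0 - i1 by
      simp [ZMod.natCast_val, ZMod.cast_id]] at hkey
    simp only [sub_sub_cancel] at hkey
    exact hi1 hkey
  obtain ⟨μ, hμ1, hμ2⟩ := hμex
  have hrμ : bth1 p f k μ - bth2 f k μ = k μ := by
    simp [bth1, bth2, hμ1, hμ2]
  have hk3 : 3 ≤ k μ := by
    have h1 := (hk μ).1
    have h2 := h21 μ
    have : k μ ≠ 2 := fun hc => h2 ⟨hc, hμ2⟩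
    omega
  have hμJ : μ ∈ JTh := by
    apply hJ1
    have hrset := hP.1 μ
    simp only [hrμ] at hrset ⊢
    rcases hrset with h | h | h | h <;> omega
  have hμ1J : μ + 1 ∈ JTh := by
    apply hJ1
    have hb2 : bth2 f k (μ + 1) = 0 := by
      simp [bth2, hμ2]
    by_cases hc : k (μ + 1 + 1) = 1
    · left; simp [bth1, hμ2, hc, hb2]
    · right; simp [bth1, hμ2, hc, hb2]
  rcases hJTh μ ⟨hμ1, hμ2⟩ with ⟨_, hemp⟩ | ⟨hnot, _⟩
  · have hmem : μ + 1 ∈ Trun f k μ ∩ JTh := by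
      refine ⟨⟨1, le_refl 1, by simp, fun j hj1 hj2 => ?_⟩, hμ1J⟩
      have : j = 1 := le_antisymm hj2 hj1
      subst this
      simpa using hμ2
    rw [hemp] at hmem
    exact hmem
  · exact hnot hμJ
end
end

section
/- Given J ⊆ ℤ/fℤ, define J′ = {i ∉ J₀ : i ∈ J} ∪ {i ∈ J₀ : ν(i) ∈ J}, and set s′ = s(b′,J′), s = s(b,J), t′ = t(b′,J′), t = t(b,J). Then for every i ∈ ℤ/fℤ: A_i(s′, s) = p^f − 1 if (i ∈ M̃ and i ∈ J′) or (i ∈ J₀ and i ∈ J′ and i+1 ∈ J₀), and A_i(s′, s) = 0 otherwise; and A_i(t′, t) = p^f − 1 if (i ∈ M̃ and i ∉ J′) or (i ∈ J₀ and i ∉ J′ and i+1 ∈ J₀), and A_i(t′, t) = 0 otherwise. -/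
open scoped Classical
noncomputable section

/-!
Write `e m = 1` if `m ∈ J′` and `k (m + 1) = 1`, and `e m = 0` otherwise. Since membership in `J′`
is constant along each run `T_ν ∪ {ν}`, a check of the definitions of `b` and `b′` gives the
pointwise identity `s′_m − s_m = p · e (m − 1) − e m`. The weighted sum `A_i` of such a
difference telescopes to `(p^f − 1) · e i`. The `t`-side is the `s`-side for the complements
of `J` and `J′`.
-/

lemma eq_of_mem_Trun {f : ℕ} {k : ZMod f → ℤ} {ν ν' i : ZMod f}
    (hν : k ν ≠ 1) (hν' : k ν' ≠ 1) (hi : i ∈ Trun f k ν) (hi' : i ∈ Trun f k ν') : ν = ν' := by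
  obtain ⟨s, -, rfl, hrun⟩ := hi
  obtain ⟨s', -, heq, hrun'⟩ := hi'
  rcases lt_trichotomy s s' with hlt | rfl | hgt
  · refine absurd (hrun' (s' - s) (by omega) (by omega)) ?_
    rwa [Nat.cast_sub hlt.le, ← add_sub_assoc, ← heq, add_sub_cancel_right]
  · exact add_right_cancel heq
  · refine absurd (hrun (s - s') (by omega) (by omega)) ?_
    rwa [Nat.cast_sub hgt.le, ← add_sub_assoc, heq, add_sub_cancel_right]

lemma Ai_eq_of_sub_eq (p f : ℕ) (c d e : ZMod f → ℤ)
    (h : ∀ m, c m - d m = p * e (m - 1) - e m) (i : ZMod f) :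
    Ai p f c d i = ((p : ℤ) ^ f - 1) * e i := by
  have hterm : ∀ j ∈ Finset.range f, (p : ℤ) ^ (f - (1 + j)) *
      (c (i + ((1 + j : ℕ) : ZMod f)) - d (i + ((1 + j : ℕ) : ZMod f)))
        = (p : ℤ) ^ (f - j) * e (i + j) - (p : ℤ) ^ (f - (j + 1)) * e (i + (j + 1 : ℕ)) := by
    intro j hj
    have hpow : (p : ℤ) ^ (f - (j + 1)) * p = (p : ℤ) ^ (f - j) := by
      rw [← pow_succ]; congr 1; have := Finset.mem_range.1 hj; omega
    have hidx : i + ((j + 1 : ℕ) : ZMod f) - 1 = i + j := by push_cast; ring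
    rw [add_comm 1 j, h, hidx]
    linear_combination e (i + j) * hpow
  rw [Ai, ← Finset.Ico_add_one_right_eq_Icc, Finset.sum_Ico_eq_sum_range, Nat.add_sub_cancel,
    Finset.sum_congr rfl hterm,
    Finset.sum_range_sub' (fun j : ℕ => (p : ℤ) ^ (f - j) * e (i + j))]
  simp only [tsub_zero, Nat.cast_zero, add_zero, tsub_self, pow_zero, CharP.cast_eq_zero, one_mul]
  ring

section Runs

variable {f : ℕ} {k : ZMod f → ℤ} {nu : ZMod f → ZMod f}
  (hnu : ∀ i, k i = 1 → ((k (nu i) ≠ 1 ∧ k (nu i + 1) = 1) ∧ i ∈ Trun f k (nu i)))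
  {J J' : Set (ZMod f)} (hJ' : ∀ i, i ∈ J' ↔ ((k i ≠ 1 ∧ i ∈ J) ∨ (k i = 1 ∧ nu i ∈ J)))
include hnu hJ'

lemma mem_iff_sub_one_mem_of_eq_one {m : ZMod f} (hm : k m = 1) : m ∈ J' ↔ m - 1 ∈ J' := by
  obtain ⟨⟨hν, -⟩, s, hs, hms, hrun⟩ := hnu m hm
  obtain rfl | hs2 : s = 1 ∨ 2 ≤ s := by omega
  · have hprev : m - 1 = nu m := by push_cast at hms; linear_combination hms
    rw [hJ' m, hJ' (m - 1), hprev]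
    simp [hm, hν]
  · have hprev : m - 1 = nu m + ((s - 1 : ℕ) : ZMod f) := by
      push_cast [Nat.cast_sub (by omega : 1 ≤ s)]; linear_combination hms
    have hm1 : k (m - 1) = 1 := hprev ▸ hrun (s - 1) (by omega) (by omega)
    have hsame : nu (m - 1) = nu m := by
      obtain ⟨⟨hν1, -⟩, hT⟩ := hnu (m - 1) hm1
      exact eq_of_mem_Trun hν1 hν hT ⟨s - 1, by omega, hprev, fun j h1 _ => hrun j h1 (by omega)⟩
    rw [hJ' m, hJ' (m - 1), hsame]
    simp [hm, hm1]

lemma sW_sub_sW_eq (p : ℕ) (m : ZMod f) :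
    sW f (bp1 p f k) (zero2 f) J' m - sW f (b1 f k) (zero2 f) J m
      = p * (if m - 1 ∈ J' ∧ k m = 1 then 1 else 0) - (if m ∈ J' ∧ k (m + 1) = 1 then 1 else 0) := by
  by_cases hkm : k m = 1
  · have hprev := mem_iff_sub_one_mem_of_eq_one hnu hJ' hkm
    simp only [sW, bp1, b1, zero2, hkm]
    split_ifs <;> first | omega | tauto
  · have hmem : m ∈ J' ↔ m ∈ J := by rw [hJ' m]; tauto
    simp only [sW, bp1, b1, zero2]
    split_ifs <;> first | omega | tauto

lemma Ai_sW_eq (p : ℕ) (i : ZMod f) :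
    Ai p f (sW f (bp1 p f k) (zero2 f) J') (sW f (b1 f k) (zero2 f) J) i
      = if i ∈ J' ∧ k (i + 1) = 1 then (p : ℤ) ^ f - 1 else 0 := by
  rw [Ai_eq_of_sub_eq p f _ _ (fun m => if m ∈ J' ∧ k (m + 1) = 1 then 1 else 0)
    (fun m => by rw [sW_sub_sW_eq hnu hJ', sub_add_cancel])]
  split_ifs <;> ring

end Runs

lemma tW_eq_sW_compl (f : ℕ) (c₁ c₂ : ZMod f → ℤ) (S : Set (ZMod f)) :
    tW f c₁ c₂ S = sW f c₁ c₂ Sᶜ := by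
  funext i
  simp only [tW, sW, Set.mem_compl_iff, ite_not]

theorem stmt13_general (p f : ℕ)
    (k : ZMod f → ℤ)
    (nu : ZMod f → ZMod f)
    (hnu : ∀ i, k i = 1 → ((k (nu i) ≠ 1 ∧ k (nu i + 1) = 1) ∧ i ∈ Trun f k (nu i)))
    (J J' : Set (ZMod f))
    (hJ' : ∀ i, i ∈ J' ↔ ((k i ≠ 1 ∧ i ∈ J) ∨ (k i = 1 ∧ nu i ∈ J))) :
    ∀ i : ZMod f,
      Ai p f (sW f (bp1 p f k) (zero2 f) J') (sW f (b1 f k) (zero2 f) J) i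
        = (if ((k i ≠ 1 ∧ k (i + 1) = 1) ∧ i ∈ J') ∨ (k i = 1 ∧ i ∈ J' ∧ k (i + 1) = 1)
            then (p : ℤ) ^ f - 1 else 0) ∧
      Ai p f (tW f (bp1 p f k) (zero2 f) J') (tW f (b1 f k) (zero2 f) J) i
        = (if ((k i ≠ 1 ∧ k (i + 1) = 1) ∧ i ∉ J') ∨ (k i = 1 ∧ i ∉ J' ∧ k (i + 1) = 1)
            then (p : ℤ) ^ f - 1 else 0) := by
  intro i
  have hJc : ∀ i, i ∈ J'ᶜ ↔ ((k i ≠ 1 ∧ i ∈ Jᶜ) ∨ (k i = 1 ∧ nu i ∈ Jᶜ)) := fun i => by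
    simp only [Set.mem_compl_iff, hJ' i]; tauto
  rw [tW_eq_sW_compl, tW_eq_sW_compl, Ai_sW_eq hnu hJ', Ai_sW_eq hnu hJc]
  constructor <;> congr 1 <;> simp only [Set.mem_compl_iff, eq_iff_iff] <;> tauto

/-- First part of Lemma A.4 of the paper: the values of `A_i(s′, s)` and `A_i(t′, t)` for
the subset `J′` derived from `J` via `ν(·)`. -/
theorem stmt13 (p f : ℕ) (hp : p.Prime) (hodd : Odd p) (hf : 1 ≤ f)
    (k : ZMod f → ℤ)
    (hk : ∀ i, 1 ≤ k i ∧ k i ≤ (p : ℤ))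
    (hone : ∃ i, k i = 1) (hnotone : ∃ i, k i ≠ 1)
    (h21 : ∀ i, ¬(k i = 2 ∧ k (i + 1) = 1))
    (nu : ZMod f → ZMod f)
    (hnu : ∀ i, k i = 1 → ((k (nu i) ≠ 1 ∧ k (nu i + 1) = 1) ∧ i ∈ Trun f k (nu i)))
    (J J' : Set (ZMod f))
    (hJ' : ∀ i, i ∈ J' ↔ ((k i ≠ 1 ∧ i ∈ J) ∨ (k i = 1 ∧ nu i ∈ J))) :
    ∀ i : ZMod f,
      Ai p f (sW f (bp1 p f k) (zero2 f) J') (sW f (b1 f k) (zero2 f) J) i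
        = (if ((k i ≠ 1 ∧ k (i + 1) = 1) ∧ i ∈ J') ∨ (k i = 1 ∧ i ∈ J' ∧ k (i + 1) = 1)
            then (p : ℤ) ^ f - 1 else 0) ∧
      Ai p f (tW f (bp1 p f k) (zero2 f) J') (tW f (b1 f k) (zero2 f) J) i
        = (if ((k i ≠ 1 ∧ k (i + 1) = 1) ∧ i ∉ J') ∨ (k i = 1 ∧ i ∉ J' ∧ k (i + 1) = 1)
            then (p : ℤ) ^ f - 1 else 0) :=
  stmt13_general p f k nu hnu J J' hJ'
end
end

section
/- Let μ ∈ M̃. Given J ⊆ ℤ/fℤ, define J^μ = {i ∉ J₀ : i ∈ J} ∪ {i ∈ J₀ ∩ T_μ : μ ∉ J} ∪ {i ∈ J₀ ∖ T_μ : ν(i) ∈ J}, and set s^μ = s(b^μ,J^μ), s = s(b,J), t^μ = t(b^μ,J^μ), t = t(b,J). Then for every i ∈ ℤ/fℤ: A_i(s^μ, s) = p^f − 1 if (i ∈ M̃, i ≠ μ and i ∈ J^μ) or (i = μ and i ∉ J^μ) or (i ∈ J₀ and i ∈ J^μ and i+1 ∈ J₀), and A_i(s^μ, s) = 0 otherwise;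 and A_i(t^μ, t) = p^f − 1 if (i ∈ M̃, i ≠ μ and i ∉ J^μ) or (i = μ and i ∈ J^μ) or (i ∈ J₀ and i ∉ J^μ and i+1 ∈ J₀), and A_i(t^μ, t) = 0 otherwise. -/
open scoped Classical
noncomputable section

section aux
variable {f : ℕ} {k : ZMod f → ℤ}

lemma trun_small (hf : 1 ≤ f) {ν x : ZMod f} (hν : k ν ≠ 1) (hx : x ∈ Trun f k ν) :
    ∃ s : ℕ, 1 ≤ s ∧ s < f ∧ x = ν + (s : ZMod f) ∧
      ∀ j : ℕ, 1 ≤ j → j ≤ s → k (ν + (j : ZMod f)) = 1 := by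
  obtain ⟨s, hs1, hxs, hrun⟩ := hx
  refine ⟨s, hs1, ?_, hxs, hrun⟩
  by_contra h
  push_neg at h
  have := hrun f hf h
  rw [ZMod.natCast_self, add_zero] at this
  exact hν this

lemma trun_unique (hf : 1 ≤ f) {ν ν' x : ZMod f} (hν : k ν ≠ 1) (hν' : k ν' ≠ 1)
    (h : x ∈ Trun f k ν) (h' : x ∈ Trun f k ν') : ν = ν' := by
  haveI : NeZero f := ⟨by omega⟩
  obtain ⟨s, hs1, hsf, hxs, hrun⟩ := trun_small hf hν h
  obtain ⟨t, ht1, htf, hxt, hrun'⟩ := trun_small hf hν' h'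
  have he : ν + (s : ZMod f) = ν' + (t : ZMod f) := hxs.symm.trans hxt
  rcases lt_trichotomy s t with hst | hst | hst
  · exfalso
    apply hν
    have h2 : ν = ν' + (((t - s : ℕ)) : ZMod f) := by
      push_cast [Nat.cast_sub hst.le]
      linear_combination he
    rw [h2]; exact hrun' (t - s) (by omega) (by omega)
  · subst hst
    exact add_right_cancel he
  · exfalso
    apply hν'
    have h2 : ν' = ν + (((s - t : ℕ)) : ZMod f) := by
      push_cast [Nat.cast_sub hst.le]
      linear_combination he.symm
    rw [h2]; exact hrun (s - t) (by omega) (by omega)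

lemma trun_ext {ν x : ZMod f} (hx : k x = 1) (h : x - 1 ∈ Trun f k ν) : x ∈ Trun f k ν := by
  obtain ⟨s, hs1, hxs, hrun⟩ := h
  refine ⟨s + 1, by omega, by push_cast; linear_combination hxs, ?_⟩
  intro j hj1 hj
  rcases eq_or_lt_of_le hj with hj | hj
  · subst hj
    have h2 : ν + ((s + 1 : ℕ) : ZMod f) = x := by push_cast; linear_combination hxs.symm
    rw [h2]; exact hx
  · exact hrun j hj1 (by omega)

lemma trun_restrict {ν x : ZMod f} (hν : k ν ≠ 1) (hx1 : k (x - 1) = 1)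
    (h : x ∈ Trun f k ν) : x - 1 ∈ Trun f k ν := by
  obtain ⟨s, hs1, hxs, hrun⟩ := h
  rcases Nat.lt_or_ge s 2 with hs | hs
  · interval_cases s
    exfalso
    apply hν
    rw [← hx1]
    congr 1
    rw [hxs]; push_cast; ring
  · refine ⟨s - 1, by omega, ?_, fun j hj1 hj2 => hrun j hj1 (by omega)⟩
    rw [hxs]; push_cast [Nat.cast_sub (by omega : 1 ≤ s)]; ring

lemma trun_succ_self {x : ZMod f} (hx : k x = 1) : x ∈ Trun f k (x - 1) := by
  refine ⟨1, le_refl 1, by push_cast; ring, fun j hj1 hj2 => ?_⟩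
  have : j = 1 := by omega
  subst this
  have h2 : x - 1 + ((1:ℕ) : ZMod f) = x := by push_cast; ring
  rw [h2]; exact hx

lemma trun_eq_pred {ν x : ZMod f} (hν : k ν ≠ 1) (hx1 : k (x - 1) ≠ 1)
    (h : x ∈ Trun f k ν) : ν = x - 1 := by
  obtain ⟨s, hs1, hxs, hrun⟩ := h
  rcases Nat.lt_or_ge s 2 with hs | hs
  · interval_cases s
    rw [hxs]; push_cast; ring
  · exfalso
    apply hx1
    have h2 : x - 1 = ν + ((s - 1 : ℕ) : ZMod f) := by
      rw [hxs]; push_cast [Nat.cast_sub (by omega : 1 ≤ s)]; ring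
    rw [h2]; exact hrun _ (by omega) (by omega)

lemma Ai_eq (p f : ℕ) (hf : 1 ≤ f) (c d ε : ZMod f → ℤ)
    (h : ∀ x : ZMod f, c x - d x = p * ε (x - 1) - ε x) (i : ZMod f) :
    Ai p f c d i = ((p : ℤ) ^ f - 1) * ε i := by
  have key : ∀ j ∈ Finset.Icc 1 f,
      (p:ℤ) ^ (f - j) * (c (i + (j : ZMod f)) - d (i + (j : ZMod f))) =
      (p:ℤ) ^ (f - (j-1)) * ε (i + ((j-1 : ℕ) : ZMod f)) - (p:ℤ) ^ (f - j) * ε (i + (j : ZMod f)) := by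
    intro j hj
    simp only [Finset.mem_Icc] at hj
    rw [h]
    have h1 : i + (j : ZMod f) - 1 = i + ((j - 1 : ℕ) : ZMod f) := by
      push_cast [Nat.cast_sub hj.1]; ring
    have h2 : (p:ℤ) ^ (f - j) * p = (p:ℤ) ^ (f - (j-1)) := by
      rw [← pow_succ]
      congr 1
      omega
    rw [h1, mul_sub, ← mul_assoc, mul_comm ((p:ℤ) ^ (f - j)) (p:ℤ), mul_comm (p:ℤ), h2]
  rw [Ai, Finset.sum_congr rfl key]
  have hIcc : Finset.Icc 1 f = Finset.map ⟨fun n => n + 1, add_left_injective 1⟩ (Finset.range f) := by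
    ext n
    simp only [Finset.mem_Icc, Finset.mem_map, Finset.mem_range, Function.Embedding.coeFn_mk]
    constructor
    · rintro ⟨h1, h2⟩; exact ⟨n - 1, by omega, by omega⟩
    · rintro ⟨a, h1, rfl⟩; omega
  rw [hIcc, Finset.sum_map]
  simp only [Function.Embedding.coeFn_mk, Nat.add_sub_cancel]
  rw [Finset.sum_range_sub' (fun n => (p:ℤ) ^ (f - n) * ε (i + (n : ZMod f)))]
  simp only [Nat.sub_zero, Nat.cast_zero, add_zero, ZMod.natCast_self, Nat.sub_self, pow_zero, one_mul]
  ring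

end aux

/-- Second part of Lemma A.4 of the paper: the values of `A_i(s^μ, s)` and `A_i(t^μ, t)`
for the subset `J^μ` derived from `J`. -/
theorem stmt14 (p f : ℕ) (hp : p.Prime) (hodd : Odd p) (hf : 1 ≤ f)
    (k : ZMod f → ℤ)
    (hk : ∀ i, 1 ≤ k i ∧ k i ≤ (p : ℤ))
    (hone : ∃ i, k i = 1) (hnotone : ∃ i, k i ≠ 1)
    (h21 : ∀ i, ¬(k i = 2 ∧ k (i + 1) = 1))
    (nu : ZMod f → ZMod f)
    (hnu : ∀ i, k i = 1 → ((k (nu i) ≠ 1 ∧ k (nu i + 1) = 1) ∧ i ∈ Trun f k (nu i)))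
    (μ : ZMod f) (hμ : k μ ≠ 1 ∧ k (μ + 1) = 1)
    (J Jμ : Set (ZMod f))
    (hJμ : ∀ i, i ∈ Jμ ↔ ((k i ≠ 1 ∧ i ∈ J) ∨ (k i = 1 ∧ i ∈ Trun f k μ ∧ μ ∉ J) ∨
      (k i = 1 ∧ i ∉ Trun f k μ ∧ nu i ∈ J))) :
    ∀ i : ZMod f,
      Ai p f (sW f (bmu1 p f k μ) (bmu2 f μ) Jμ) (sW f (b1 f k) (zero2 f) J) i
        = (if ((k i ≠ 1 ∧ k (i + 1) = 1) ∧ i ≠ μ ∧ i ∈ Jμ) ∨ (i = μ ∧ i ∉ Jμ) ∨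
              (k i = 1 ∧ i ∈ Jμ ∧ k (i + 1) = 1)
            then (p : ℤ) ^ f - 1 else 0) ∧
      Ai p f (tW f (bmu1 p f k μ) (bmu2 f μ) Jμ) (tW f (b1 f k) (zero2 f) J) i
        = (if ((k i ≠ 1 ∧ k (i + 1) = 1) ∧ i ≠ μ ∧ i ∉ Jμ) ∨ (i = μ ∧ i ∈ Jμ) ∨
              (k i = 1 ∧ i ∉ Jμ ∧ k (i + 1) = 1)
            then (p : ℤ) ^ f - 1 else 0) := by
  have hkμ : k μ ≠ 1 := hμ.1
  -- membership transfer lemmas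
  have hE1 : ∀ x : ZMod f, k x = 1 → k (x - 1) = 1 → (x ∈ Jμ ↔ x - 1 ∈ Jμ) := by
    intro x hx hx1
    have hT : x ∈ Trun f k μ ↔ x - 1 ∈ Trun f k μ :=
      ⟨fun h => trun_restrict hkμ hx1 h, fun h => trun_ext hx h⟩
    have hnux : nu x = nu (x - 1) := by
      obtain ⟨⟨hn1, _⟩, hmem⟩ := hnu x hx
      obtain ⟨⟨hn1', _⟩, hmem'⟩ := hnu (x - 1) hx1
      exact trun_unique hf hn1 hn1' hmem (trun_ext hx hmem')
    rw [hJμ x, hJμ (x - 1), hT, hnux]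
    constructor
    · rintro (⟨h, _⟩ | ⟨_, h⟩ | ⟨_, h⟩)
      exacts [absurd hx h, Or.inr (Or.inl ⟨hx1, h⟩), Or.inr (Or.inr ⟨hx1, h⟩)]
    · rintro (⟨h, _⟩ | ⟨_, h⟩ | ⟨_, h⟩)
      exacts [absurd hx1 h, Or.inr (Or.inl ⟨hx, h⟩), Or.inr (Or.inr ⟨hx, h⟩)]
  have hμJ : μ ∈ Jμ ↔ μ ∈ J := by
    rw [hJμ μ]
    constructor
    · rintro (⟨_, h⟩ | ⟨h, _⟩ | ⟨h, _⟩)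
      exacts [h, absurd h hkμ, absurd h hkμ]
    · intro h; exact Or.inl ⟨hkμ, h⟩
  have hE2 : ∀ x : ZMod f, k x = 1 → x - 1 = μ → (x ∈ Jμ ↔ μ ∉ Jμ) := by
    intro x hx hxμ
    have hxT : x ∈ Trun f k μ := hxμ ▸ trun_succ_self hx
    rw [hJμ x, hμJ]
    constructor
    · rintro (⟨h, _⟩ | ⟨_, _, h⟩ | ⟨_, h, _⟩)
      exacts [absurd hx h, h, absurd hxT h]
    · intro h; exact Or.inr (Or.inl ⟨hx, hxT, h⟩)
  have hE3 : ∀ x : ZMod f, k x = 1 → k (x - 1) ≠ 1 → x - 1 ≠ μ → (x ∈ Jμ ↔ x - 1 ∈ Jμ) := by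
    intro x hx hx1 hxμ
    have hxT : x ∉ Trun f k μ := fun h => hxμ (trun_eq_pred hkμ hx1 h).symm
    have hnux : nu x = x - 1 := by
      obtain ⟨⟨hn1, _⟩, hmem⟩ := hnu x hx
      exact trun_eq_pred hn1 hx1 hmem
    rw [hJμ x, hJμ (x - 1), hnux]
    constructor
    · rintro (⟨h, _⟩ | ⟨_, h, _⟩ | ⟨_, _, h⟩)
      exacts [absurd hx h, absurd h hxT, Or.inl ⟨hx1, h⟩]
    · rintro (⟨_, h⟩ | ⟨h, _⟩ | ⟨h, _⟩)
      exacts [Or.inr (Or.inr ⟨hx, hxT, h⟩), absurd h hx1, absurd h hx1]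
  -- key equivalences
  have hKey : ∀ x : ZMod f, k x = 1 → (x ∈ Jμ ↔
      (((k (x-1) ≠ 1 ∧ k (x-1+1) = 1) ∧ x-1 ≠ μ ∧ x-1 ∈ Jμ) ∨ (x-1 = μ ∧ x-1 ∉ Jμ) ∨
        (k (x-1) = 1 ∧ x-1 ∈ Jμ ∧ k (x-1+1) = 1))) := by
    intro x hx
    have hxx : x - 1 + 1 = x := by ring
    rw [hxx]
    by_cases h1 : k (x - 1) = 1
    · have hiff := hE1 x hx h1
      have hne : x - 1 ≠ μ := fun h => hkμ (h ▸ h1)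
      constructor
      · intro h; exact Or.inr (Or.inr ⟨h1, hiff.mp h, hx⟩)
      · rintro (⟨⟨h2, _⟩, _⟩ | ⟨h2, _⟩ | ⟨_, h2, _⟩)
        exacts [absurd h1 h2, absurd h2 hne, hiff.mpr h2]
    · by_cases h2 : x - 1 = μ
      · have hiff := hE2 x hx h2
        constructor
        · intro h; exact Or.inr (Or.inl ⟨h2, h2 ▸ hiff.mp h⟩)
        · rintro (⟨_, hc, _⟩ | ⟨_, hc⟩ | ⟨hc, _⟩)
          exacts [absurd h2 hc, hiff.mpr (h2 ▸ hc), absurd hc h1]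
      · have hiff := hE3 x hx h1 h2
        constructor
        · intro h; exact Or.inl ⟨⟨h1, hx⟩, h2, hiff.mp h⟩
        · rintro (⟨_, _, hc⟩ | ⟨hc, _⟩ | ⟨hc, _⟩)
          exacts [hiff.mpr hc, absurd hc h2, absurd hc h1]
  have hKey' : ∀ x : ZMod f, k x = 1 → (x ∉ Jμ ↔
      (((k (x-1) ≠ 1 ∧ k (x-1+1) = 1) ∧ x-1 ≠ μ ∧ x-1 ∉ Jμ) ∨ (x-1 = μ ∧ x-1 ∈ Jμ) ∨
        (k (x-1) = 1 ∧ x-1 ∉ Jμ ∧ k (x-1+1) = 1))) := by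
    intro x hx
    have hxx : x - 1 + 1 = x := by ring
    rw [hxx]
    by_cases h1 : k (x - 1) = 1
    · have hiff := hE1 x hx h1
      have hne : x - 1 ≠ μ := fun h => hkμ (h ▸ h1)
      constructor
      · intro h; exact Or.inr (Or.inr ⟨h1, fun hc => h (hiff.mpr hc), hx⟩)
      · rintro (⟨⟨h2, _⟩, _⟩ | ⟨h2, _⟩ | ⟨_, h2, _⟩)
        exacts [absurd h1 h2, absurd h2 hne, fun hc => h2 (hiff.mp hc)]
    · by_cases h2 : x - 1 = μ
      · have hiff := hE2 x hx h2
        constructor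
        · intro h
          refine Or.inr (Or.inl ⟨h2, h2 ▸ ?_⟩)
          by_contra hc
          exact h (hiff.mpr hc)
        · rintro (⟨_, hc, _⟩ | ⟨_, hc⟩ | ⟨hc, _⟩)
          · exact absurd h2 hc
          · intro hm; exact (hiff.mp hm) (h2 ▸ hc)
          · exact absurd hc h1
      · have hiff := hE3 x hx h1 h2
        constructor
        · intro h; exact Or.inl ⟨⟨h1, hx⟩, h2, fun hc => h (hiff.mpr hc)⟩
        · rintro (⟨_, _, hc⟩ | ⟨hc, _⟩ | ⟨hc, _⟩)
          exacts [fun hm => hc (hiff.mp hm), absurd hc h2, absurd hc h1]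
  have hZ1 : ∀ x : ZMod f, k x ≠ 1 → k (x - 1 + 1) ≠ 1 := by
    intro x hx
    have hxx : x - 1 + 1 = x := by ring
    rw [hxx]; exact hx
  have hZ2 : ∀ x : ZMod f, k x ≠ 1 → x - 1 ≠ μ := by
    intro x hx h
    apply hx
    have hxx : x - 1 + 1 = x := by ring
    rw [← hxx, h]; exact hμ.2
  have hJJ : ∀ x : ZMod f, k x ≠ 1 → (x ∈ Jμ ↔ x ∈ J) := by
    intro x hx
    rw [hJμ x]
    constructor
    · rintro (⟨_, h⟩ | ⟨h, _⟩ | ⟨h, _⟩)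
      exacts [h, absurd h hx, absurd h hx]
    · intro h; exact Or.inl ⟨hx, h⟩
  intro i
  set E : ZMod f → ℤ := fun x =>
    if ((k x ≠ 1 ∧ k (x + 1) = 1) ∧ x ≠ μ ∧ x ∈ Jμ) ∨ (x = μ ∧ x ∉ Jμ) ∨
        (k x = 1 ∧ x ∈ Jμ ∧ k (x + 1) = 1) then (1 : ℤ) else 0 with hEdef
  set E' : ZMod f → ℤ := fun x =>
    if ((k x ≠ 1 ∧ k (x + 1) = 1) ∧ x ≠ μ ∧ x ∉ Jμ) ∨ (x = μ ∧ x ∈ Jμ) ∨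
        (k x = 1 ∧ x ∉ Jμ ∧ k (x + 1) = 1) then (1 : ℤ) else 0 with hE'def
  have hEpos : ∀ y : ZMod f, (((k y ≠ 1 ∧ k (y + 1) = 1) ∧ y ≠ μ ∧ y ∈ Jμ) ∨ (y = μ ∧ y ∉ Jμ) ∨
      (k y = 1 ∧ y ∈ Jμ ∧ k (y + 1) = 1)) → E y = 1 := by
    intro y h; rw [hEdef]; exact if_pos h
  have hEneg : ∀ y : ZMod f, ¬(((k y ≠ 1 ∧ k (y + 1) = 1) ∧ y ≠ μ ∧ y ∈ Jμ) ∨ (y = μ ∧ y ∉ Jμ) ∨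
      (k y = 1 ∧ y ∈ Jμ ∧ k (y + 1) = 1)) → E y = 0 := by
    intro y h; rw [hEdef]; exact if_neg h
  have hE'pos : ∀ y : ZMod f, (((k y ≠ 1 ∧ k (y + 1) = 1) ∧ y ≠ μ ∧ y ∉ Jμ) ∨ (y = μ ∧ y ∈ Jμ) ∨
      (k y = 1 ∧ y ∉ Jμ ∧ k (y + 1) = 1)) → E' y = 1 := by
    intro y h; rw [hE'def]; exact if_pos h
  have hE'neg : ∀ y : ZMod f, ¬(((k y ≠ 1 ∧ k (y + 1) = 1) ∧ y ≠ μ ∧ y ∉ Jμ) ∨ (y = μ ∧ y ∈ Jμ) ∨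
      (k y = 1 ∧ y ∉ Jμ ∧ k (y + 1) = 1)) → E' y = 0 := by
    intro y h; rw [hE'def]; exact if_neg h
  have hD : ∀ x : ZMod f, sW f (bmu1 p f k μ) (bmu2 f μ) Jμ x - sW f (b1 f k) (zero2 f) J x
      = (p : ℤ) * E (x - 1) - E x := by
    intro x
    by_cases hx : k x = 1
    · have hxμ : x ≠ μ := fun h => hkμ (h ▸ hx)
      have hEx1 : E (x - 1) = (if x ∈ Jμ then 1 else 0) := by
        by_cases hm : x ∈ Jμ
        · rw [if_pos hm]; exact hEpos _ ((hKey x hx).mp hm)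
        · rw [if_neg hm]; exact hEneg _ (fun h => hm ((hKey x hx).mpr h))
      have hEx : E x = (if x ∈ Jμ ∧ k (x + 1) = 1 then 1 else 0) := by
        by_cases hm : x ∈ Jμ ∧ k (x + 1) = 1
        · rw [if_pos hm]; exact hEpos _ (Or.inr (Or.inr ⟨hx, hm.1, hm.2⟩))
        · rw [if_neg hm]
          refine hEneg _ ?_
          rintro (⟨⟨h, _⟩, _⟩ | ⟨h, _⟩ | ⟨_, h1, h2⟩)
          exacts [h hx, hxμ h, hm ⟨h1, h2⟩]
      rw [hEx1, hEx]
      simp only [sW, bmu1, bmu2, bp1, b1, zero2, if_neg hxμ, hx]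
      by_cases hm : x ∈ Jμ <;> by_cases hk1 : k (x + 1) = 1 <;>
        by_cases hj : x ∈ J <;> simp [hm, hk1, hj] <;> ring
    · have hne := hZ1 x hx
      have hneμ := hZ2 x hx
      have hEx1 : E (x - 1) = 0 := by
        refine hEneg _ ?_
        rintro (⟨⟨_, h⟩, _⟩ | ⟨h, _⟩ | ⟨_, _, h⟩)
        exacts [hne h, hneμ h, hne h]
      have hJx := hJJ x hx
      rw [hEx1]
      by_cases hxμ : x = μ
      · subst hxμ
        have hEx : E x = (if x ∈ Jμ then 0 else 1) := by
          by_cases hm : x ∈ Jμ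
          · rw [if_pos hm]
            refine hEneg _ ?_
            rintro (⟨_, h, _⟩ | ⟨_, h⟩ | ⟨h, _⟩)
            exacts [h rfl, h hm, hx h]
          · rw [if_neg hm]; exact hEpos _ (Or.inr (Or.inl ⟨rfl, hm⟩))
        rw [hEx]
        simp only [sW, bmu1, bmu2, b1, zero2, if_pos rfl]
        by_cases hm : x ∈ Jμ
        · have hj := hJx.mp hm
          simp [hm, hj]
        · have hj : x ∉ J := fun h => hm (hJx.mpr h)
          simp [hm, hj]
      · have hEx : E x = (if x ∈ Jμ ∧ k (x + 1) = 1 then 1 else 0) := by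
          by_cases hm : x ∈ Jμ ∧ k (x + 1) = 1
          · rw [if_pos hm]; exact hEpos _ (Or.inl ⟨⟨hx, hm.2⟩, hxμ, hm.1⟩)
          · rw [if_neg hm]
            refine hEneg _ ?_
            rintro (⟨⟨_, h1⟩, _, h2⟩ | ⟨h, _⟩ | ⟨h, _⟩)
            exacts [hm ⟨h2, h1⟩, hxμ h, hx h]
        rw [hEx]
        simp only [sW, bmu1, bmu2, bp1, b1, zero2, if_neg hxμ, if_neg hx]
        by_cases hm : x ∈ Jμ
        · have hj := hJx.mp hm
          by_cases hk1 : k (x + 1) = 1 <;> simp [hm, hj, hk1] <;> ring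
        · have hj : x ∉ J := fun h => hm (hJx.mpr h)
          by_cases hk1 : k (x + 1) = 1 <;> simp [hm, hj, hk1]
  have hD' : ∀ x : ZMod f, tW f (bmu1 p f k μ) (bmu2 f μ) Jμ x - tW f (b1 f k) (zero2 f) J x
      = (p : ℤ) * E' (x - 1) - E' x := by
    intro x
    by_cases hx : k x = 1
    · have hxμ : x ≠ μ := fun h => hkμ (h ▸ hx)
      have hEx1 : E' (x - 1) = (if x ∈ Jμ then 0 else 1) := by
        by_cases hm : x ∈ Jμ
        · rw [if_pos hm]; exact hE'neg _ (fun h => ((hKey' x hx).mpr h) hm)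
        · rw [if_neg hm]; exact hE'pos _ ((hKey' x hx).mp hm)
      have hEx : E' x = (if x ∉ Jμ ∧ k (x + 1) = 1 then 1 else 0) := by
        by_cases hm : x ∉ Jμ ∧ k (x + 1) = 1
        · rw [if_pos hm]; exact hE'pos _ (Or.inr (Or.inr ⟨hx, hm.1, hm.2⟩))
        · rw [if_neg hm]
          refine hE'neg _ ?_
          rintro (⟨⟨h, _⟩, _⟩ | ⟨h, _⟩ | ⟨_, h1, h2⟩)
          exacts [h hx, hxμ h, hm ⟨h1, h2⟩]
      rw [hEx1, hEx]
      simp only [tW, bmu1, bmu2, bp1, b1, zero2, if_neg hxμ, hx]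
      by_cases hm : x ∈ Jμ <;> by_cases hk1 : k (x + 1) = 1 <;>
        by_cases hj : x ∈ J <;> simp [hm, hk1, hj] <;> ring
    · have hne := hZ1 x hx
      have hneμ := hZ2 x hx
      have hEx1 : E' (x - 1) = 0 := by
        refine hE'neg _ ?_
        rintro (⟨⟨_, h⟩, _⟩ | ⟨h, _⟩ | ⟨_, _, h⟩)
        exacts [hne h, hneμ h, hne h]
      have hJx := hJJ x hx
      rw [hEx1]
      by_cases hxμ : x = μ
      · subst hxμ
        have hEx : E' x = (if x ∈ Jμ then 1 else 0) := by
          by_cases hm : x ∈ Jμ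
          · rw [if_pos hm]; exact hE'pos _ (Or.inr (Or.inl ⟨rfl, hm⟩))
          · rw [if_neg hm]
            refine hE'neg _ ?_
            rintro (⟨_, h, _⟩ | ⟨_, h⟩ | ⟨h, _⟩)
            exacts [h rfl, hm h, hx h]
        rw [hEx]
        simp only [tW, bmu1, bmu2, b1, zero2, if_pos rfl]
        by_cases hm : x ∈ Jμ
        · have hj := hJx.mp hm
          simp [hm, hj]
        · have hj : x ∉ J := fun h => hm (hJx.mpr h)
          simp [hm, hj]
      · have hEx : E' x = (if x ∉ Jμ ∧ k (x + 1) = 1 then 1 else 0) := by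
          by_cases hm : x ∉ Jμ ∧ k (x + 1) = 1
          · rw [if_pos hm]; exact hE'pos _ (Or.inl ⟨⟨hx, hm.2⟩, hxμ, hm.1⟩)
          · rw [if_neg hm]
            refine hE'neg _ ?_
            rintro (⟨⟨_, h1⟩, _, h2⟩ | ⟨h, _⟩ | ⟨h, _⟩)
            exacts [hm ⟨h2, h1⟩, hxμ h, hx h]
        rw [hEx]
        simp only [tW, bmu1, bmu2, bp1, b1, zero2, if_neg hxμ, if_neg hx]
        by_cases hm : x ∈ Jμ
        · have hj := hJx.mp hm
          by_cases hk1 : k (x + 1) = 1 <;> simp [hm, hj, hk1]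
        · have hj : x ∉ J := fun h => hm (hJx.mpr h)
          by_cases hk1 : k (x + 1) = 1 <;> simp [hm, hj, hk1] <;> ring
  constructor
  · rw [Ai_eq p f hf _ _ E hD i, hEdef]
    by_cases h : ((k i ≠ 1 ∧ k (i + 1) = 1) ∧ i ≠ μ ∧ i ∈ Jμ) ∨ (i = μ ∧ i ∉ Jμ) ∨
        (k i = 1 ∧ i ∈ Jμ ∧ k (i + 1) = 1)
    · simp only [if_pos h]; ring
    · simp only [if_neg h]; ring
  · rw [Ai_eq p f hf _ _ E' hD' i, hE'def]
    by_cases h : ((k i ≠ 1 ∧ k (i + 1) = 1) ∧ i ≠ μ ∧ i ∉ Jμ) ∨ (i = μ ∧ i ∈ Jμ) ∨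
        (k i = 1 ∧ i ∉ Jμ ∧ k (i + 1) = 1)
    · simp only [if_pos h]; ring
    · simp only [if_neg h]; ring
end
end

section
/- Let μ ∈ M̃ and let n ≥ 1 be the integer with k_{μ+1} = ⋯ = k_{μ+n} = 1 and k_{μ+n+1} ≠ 1 (so n = |T_μ|). Suppose J′ and J^μ are balanced subsets of ℤ/2fℤ satisfying Σ₂(s(b′,J′)) ≡ Σ₂(s(b^μ,J^μ)) (mod p^{2f} − 1) and Σ₂(t(b′,J′)) ≡ Σ₂(t(b^μ,J^μ)) (mod p^{2f} − 1). Then for every σ ∈ ℤ/2fℤ with π(σ) = μ: either σ ∈ J′ and σ+1, σ+2, …, σ+n ∈ J′, or σ ∉ J′ and σ+1, σ+2, …, σ+n ∉ J′. -/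
open scoped Classical
noncomputable section

/-- The natural reduction `π : ℤ/2fℤ → ℤ/fℤ`. -/
def pi2 (f : ℕ) : ZMod (2 * f) → ZMod f :=
  ZMod.castHom (dvd_mul_left f 2) (ZMod f)

/-- A subset of `ℤ/2fℤ` is balanced if for every `σ` exactly one of `σ` and `σ + f`
lies in it. -/
def BalancedSet (f : ℕ) (S : Set (ZMod (2 * f))) : Prop :=
  ∀ σ : ZMod (2 * f), Xor' (σ ∈ S) (σ + (f : ZMod (2 * f)) ∈ S)

/-- `Σ₂(v) = Σ_{σ=0}^{2f−1} v_σ · p^{2f−1−σ}`. -/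
def Sig2 (p f : ℕ) (v : ZMod (2 * f) → ℤ) : ℤ :=
  ∑ i ∈ Finset.range (2 * f), v (i : ZMod (2 * f)) * (p : ℤ) ^ (2 * f - 1 - i)

/-- `s_σ(c,S)` for a subset `S ⊆ ℤ/2fℤ` and weight data `c` on `ℤ/fℤ`. -/
def sW2 (f : ℕ) (c1 c2 : ZMod f → ℤ) (S : Set (ZMod (2 * f))) : ZMod (2 * f) → ℤ :=
  fun σ => if σ ∈ S then c1 (pi2 f σ) else c2 (pi2 f σ)

/-- `t_σ(c,S)` for a subset `S ⊆ ℤ/2fℤ` and weight data `c` on `ℤ/fℤ`. -/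
def tW2 (f : ℕ) (c1 c2 : ZMod f → ℤ) (S : Set (ZMod (2 * f))) : ZMod (2 * f) → ℤ :=
  fun σ => if σ ∈ S then c2 (pi2 f σ) else c1 (pi2 f σ)

def A2 (p N : ℕ) (δ : ZMod N → ℤ) (σ : ZMod N) : ℤ :=
  ∑ i ∈ Finset.range N, (p : ℤ) ^ (N - 1 - i) * δ (σ + 1 + (i : ZMod N))

lemma A2_rec (p N : ℕ) (hN : 0 < N) (δ : ZMod N → ℤ) (σ : ZMod N) :
    A2 p N δ (σ + 1) = (p : ℤ) * A2 p N δ σ - ((p : ℤ) ^ N - 1) * δ (σ + 1) := by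
  obtain ⟨m, rfl⟩ : ∃ m, N = m + 1 := ⟨N - 1, by omega⟩
  have hm0 : ((m : ℕ) : ZMod (m + 1)) + 1 = 0 := by
    have h := ZMod.natCast_self (m + 1)
    push_cast at h
    linear_combination h
  have hlast : σ + 1 + 1 + ((m : ℕ) : ZMod (m + 1)) = σ + 1 := by
    linear_combination hm0
  have key : ∀ i ∈ Finset.range m,
      (p : ℤ) * ((p : ℤ) ^ (m + 1 - 1 - (i + 1)) * δ (σ + 1 + ((i + 1 : ℕ) : ZMod (m + 1))))
        = (p : ℤ) ^ (m + 1 - 1 - i) * δ (σ + 1 + 1 + ((i : ℕ) : ZMod (m + 1))) := by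
    intro i hi
    have hi' : i < m := Finset.mem_range.mp hi
    have hex : m + 1 - 1 - (i + 1) + 1 = m + 1 - 1 - i := by omega
    have hcast : σ + 1 + ((i + 1 : ℕ) : ZMod (m + 1)) = σ + 1 + 1 + ((i : ℕ) : ZMod (m + 1)) := by
      push_cast; ring
    rw [hcast, ← hex, pow_succ]
    ring
  unfold A2
  rw [Finset.mul_sum, Finset.sum_range_succ, Finset.sum_range_succ',
    Finset.sum_congr rfl key, hlast]
  simp only [Nat.cast_zero, add_zero, Nat.sub_self, Nat.sub_zero, pow_zero, one_mul,
    Nat.add_sub_cancel]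
  ring

/-- Proposition 7.2 of the paper: if `J′` and `J^μ` are balanced subsets of `ℤ/2fℤ`
satisfying the congruences mod `p^{2f} − 1`, then for every `σ` above `μ` either `σ` and the
following run `σ+1, …, σ+n` all lie in `J′`, or none of them do. -/
theorem stmt18 (p f : ℕ) (hp : p.Prime) (hodd : Odd p) (hf : 1 ≤ f)
    (k : ZMod f → ℤ)
    (hk : ∀ i, 1 ≤ k i ∧ k i ≤ (p : ℤ))
    (hone : ∃ i, k i = 1) (hnotone : ∃ i, k i ≠ 1)
    (h21 : ∀ i, ¬(k i = 2 ∧ k (i + 1) = 1))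
    (μ : ZMod f) (hμ : k μ ≠ 1 ∧ k (μ + 1) = 1)
    (n : ℕ) (hn : 1 ≤ n)
    (hrun : ∀ j : ℕ, 1 ≤ j → j ≤ n → k (μ + (j : ZMod f)) = 1)
    (hend : k (μ + (n : ZMod f) + 1) ≠ 1)
    (J' Jμ : Set (ZMod (2 * f)))
    (hbal' : BalancedSet f J') (hbalμ : BalancedSet f Jμ)
    (hs : Int.ModEq ((p : ℤ) ^ (2 * f) - 1)
      (Sig2 p f (sW2 f (bp1 p f k) (zero2 f) J'))
      (Sig2 p f (sW2 f (bmu1 p f k μ) (bmu2 f μ) Jμ)))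
    (ht : Int.ModEq ((p : ℤ) ^ (2 * f) - 1)
      (Sig2 p f (tW2 f (bp1 p f k) (zero2 f) J'))
      (Sig2 p f (tW2 f (bmu1 p f k μ) (bmu2 f μ) Jμ))) :
    ∀ σ : ZMod (2 * f), pi2 f σ = μ →
      (σ ∈ J' ∧ ∀ j : ℕ, 1 ≤ j → j ≤ n → σ + (j : ZMod (2 * f)) ∈ J') ∨
      (σ ∉ J' ∧ ∀ j : ℕ, 1 ≤ j → j ≤ n → σ + (j : ZMod (2 * f)) ∉ J') := by
  have hs' : Int.ModEq ((p : ℤ) ^ (2 * f) - 1)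
      (∑ i ∈ Finset.range (2 * f), (if (i : ZMod (2*f)) ∈ J' then bp1 p f k (pi2 f (i : ZMod (2*f))) else 0) * (p : ℤ) ^ (2 * f - 1 - i))
      (∑ i ∈ Finset.range (2 * f), (if (i : ZMod (2*f)) ∈ Jμ then bmu1 p f k μ (pi2 f (i : ZMod (2*f))) else bmu2 f μ (pi2 f (i : ZMod (2*f)))) * (p : ℤ) ^ (2 * f - 1 - i)) := by
    simp only [Sig2, sW2, zero2] at hs
    exact hs
  -- basic numerics
  have hp3 : (3 : ℤ) ≤ (p : ℤ) := by
    obtain ⟨m, hm⟩ := hodd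
    have h2 := hp.two_le
    omega
  haveI : NeZero (2 * f) := ⟨by omega⟩
  have hN1 : 0 < 2 * f := by omega
  have hkμ1 : 3 ≤ k μ := by
    have h1 := hk μ
    have h3 := h21 μ
    have h4 := hμ.1
    have h5 := hμ.2
    omega
  have hkμ2 : k μ ≤ (p : ℤ) := (hk μ).2
  have hnf : n < f := by
    by_contra hcon
    push_neg at hcon
    have h := hrun f hf hcon
    rw [ZMod.natCast_self, add_zero] at h
    exact hμ.1 h
  -- the difference function
  set δ : ZMod (2 * f) → ℤ := fun τ =>
    (if τ ∈ J' then bp1 p f k (pi2 f τ) else 0) -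
      (if τ ∈ Jμ then bmu1 p f k μ (pi2 f τ) else bmu2 f μ (pi2 f τ)) with hδdef
  have hδval : ∀ τ, δ τ = (if τ ∈ J' then bp1 p f k (pi2 f τ) else 0) -
      (if τ ∈ Jμ then bmu1 p f k μ (pi2 f τ) else bmu2 f μ (pi2 f τ)) := fun τ => rfl
  -- bounds on weights
  have hbp : ∀ i, 1 ≤ bp1 p f k i ∧ bp1 p f k i ≤ (p : ℤ) := by
    intro i
    have h1 := hk i
    have h2 := hk (i + 1)
    have h3 := h21 i
    unfold bp1
    split_ifs <;> omega
  have hbpμ : bp1 p f k μ = k μ - 2 := by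
    unfold bp1
    rw [if_neg hμ.1, if_pos hμ.2]
  have hbmu1μ : bmu1 p f k μ μ = k μ - 1 := by
    unfold bmu1; rw [if_pos rfl]
  have hbmu2μ : bmu2 f μ μ = -1 := by
    unfold bmu2; rw [if_pos rfl]
  have hδabs : ∀ τ, |δ τ| ≤ (p : ℤ) := by
    intro τ
    rw [abs_le, hδval]
    by_cases hm : pi2 f τ = μ
    · rw [hm, hbpμ, hbmu1μ, hbmu2μ]
      split_ifs <;> constructor <;> omega
    · have h1 := hbp (pi2 f τ)
      have h2 : bmu1 p f k μ (pi2 f τ) = bp1 p f k (pi2 f τ) := by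
        unfold bmu1; rw [if_neg hm]
      have h3 : bmu2 f μ (pi2 f τ) = 0 := by
        unfold bmu2; rw [if_neg hm]
      rw [h2, h3]
      split_ifs <;> constructor <;> omega
  -- divisor
  set D : ℤ := (p : ℤ) ^ (2 * f) - 1 with hDdef
  have hDpos : 0 < D := by
    have : (1 : ℤ) < (p : ℤ) ^ (2 * f) :=
      one_lt_pow₀ (by omega) (by omega)
    omega
  -- A2 at -1 is the Sig2 difference
  have hdvd0 : D ∣ A2 p (2 * f) δ (-1) := by
    have hA0 : A2 p (2 * f) δ (-1) =
        (∑ i ∈ Finset.range (2 * f), (if (i : ZMod (2*f)) ∈ J' then bp1 p f k (pi2 f (i : ZMod (2*f))) else 0) * (p : ℤ) ^ (2 * f - 1 - i))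
        - (∑ i ∈ Finset.range (2 * f), (if (i : ZMod (2*f)) ∈ Jμ then bmu1 p f k μ (pi2 f (i : ZMod (2*f))) else bmu2 f μ (pi2 f (i : ZMod (2*f)))) * (p : ℤ) ^ (2 * f - 1 - i)) := by
      unfold A2
      rw [← Finset.sum_sub_distrib]
      apply Finset.sum_congr rfl
      intro i hi
      have harg : (-1 : ZMod (2 * f)) + 1 + (i : ZMod (2 * f)) = (i : ZMod (2 * f)) := by ring
      rw [harg, hδval]
      ring
    rw [hA0]
    have h := hs'.dvd
    rw [← neg_sub]
    exact dvd_neg.mpr h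
  -- divisibility everywhere
  have hdvdall : ∀ σ : ZMod (2 * f), D ∣ A2 p (2 * f) δ σ := by
    have key : ∀ m : ℕ, D ∣ A2 p (2 * f) δ (-1 + (m : ZMod (2 * f))) := by
      intro m
      induction m with
      | zero => simpa using hdvd0
      | succ m ih =>
        have hr := A2_rec p (2 * f) hN1 δ (-1 + (m : ZMod (2 * f)))
        have hcast : (-1 : ZMod (2 * f)) + ((m + 1 : ℕ) : ZMod (2 * f)) =
            (-1 + (m : ZMod (2 * f))) + 1 := by push_cast; ring
        rw [hcast, hr, ← hDdef]
        exact dvd_sub (Dvd.dvd.mul_left ih _) (Dvd.dvd.mul_right dvd_rfl _)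
    intro σ
    have h := key (σ + 1).val
    rwa [ZMod.natCast_zmod_val, show (-1 : ZMod (2 * f)) + (σ + 1) = σ by ring] at h
  -- bound on A2
  have hG : (∑ i ∈ Finset.range (2 * f), (p : ℤ) ^ i) * ((p : ℤ) - 1) = D :=
    geom_sum_mul _ _
  have hGpos : 0 < ∑ i ∈ Finset.range (2 * f), (p : ℤ) ^ i :=
    Finset.sum_pos (fun i _ => pow_pos (by omega) i) ⟨0, Finset.mem_range.mpr hN1⟩
  have hbound : ∀ σ, |A2 p (2 * f) δ σ| ≤ (∑ i ∈ Finset.range (2 * f), (p : ℤ) ^ i) * p := by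
    intro σ
    calc |A2 p (2 * f) δ σ|
        ≤ ∑ i ∈ Finset.range (2 * f), |(p : ℤ) ^ (2 * f - 1 - i) * δ (σ + 1 + (i : ZMod (2 * f)))| :=
          Finset.abs_sum_le_sum_abs _ _
      _ ≤ ∑ i ∈ Finset.range (2 * f), (p : ℤ) ^ (2 * f - 1 - i) * p := by
          apply Finset.sum_le_sum
          intro i _
          rw [abs_mul, abs_pow, abs_of_nonneg (by positivity : (0 : ℤ) ≤ (p : ℤ))]
          exact mul_le_mul_of_nonneg_left (hδabs _) (by positivity)
      _ = (∑ i ∈ Finset.range (2 * f), (p : ℤ) ^ (2 * f - 1 - i)) * p := by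
          rw [Finset.sum_mul]
      _ = (∑ i ∈ Finset.range (2 * f), (p : ℤ) ^ i) * p := by
          rw [Finset.sum_range_reflect (fun i => (p : ℤ) ^ i) (2 * f)]
  -- choice of the quotients
  have hsel : ∀ σ : ZMod (2 * f), ∃ c : ℤ,
      A2 p (2 * f) δ σ = D * c ∧ (c = -1 ∨ c = 0 ∨ c = 1) := by
    intro σ
    obtain ⟨c, hc⟩ := hdvdall σ
    refine ⟨c, hc, ?_⟩
    have hb := hbound σ
    rw [hc, abs_mul, abs_of_pos hDpos] at hb
    have habs : |c| ≤ 1 := by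
      by_contra hcon
      push_neg at hcon
      have h2 : 2 ≤ |c| := by omega
      have h3 : D * 2 ≤ D * |c| := by
        exact mul_le_mul_of_nonneg_left h2 hDpos.le
      nlinarith [mul_pos hGpos (show (0 : ℤ) < (p : ℤ) - 2 by omega)]
    have := abs_le.mp habs
    omega
  choose a haA hav using hsel
  have hrec : ∀ σ : ZMod (2 * f), δ (σ + 1) = (p : ℤ) * a σ - a (σ + 1) := by
    intro σ
    have hr := A2_rec p (2 * f) hN1 δ σ
    rw [haA, haA, ← hDdef] at hr
    have h2 : D * δ (σ + 1) = D * ((p : ℤ) * a σ - a (σ + 1)) := by linear_combination hr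
    exact mul_left_cancel₀ (ne_of_gt hDpos) h2
  -- now the local analysis
  intro σ0 hπ
  have hπadd : ∀ (m : ℕ), pi2 f (σ0 + (m : ZMod (2 * f))) = μ + (m : ZMod f) := by
    intro m
    unfold pi2 at hπ ⊢
    rw [map_add, map_natCast, hπ]
  have hneμ : ∀ j : ℕ, 1 ≤ j → j ≤ n → μ + (j : ZMod f) ≠ μ := by
    intro j h1 h2 hcontra
    have h0 : ((j : ℕ) : ZMod f) = 0 := by
      have := hcontra
      have h := add_left_cancel (a := μ) (b := ((j : ℕ) : ZMod f)) (c := 0)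
        (by rw [add_zero]; exact hcontra)
      exact h
    have hdvd : f ∣ j := (ZMod.natCast_eq_zero_iff j f).mp h0
    have := Nat.le_of_dvd (by omega) hdvd
    omega
  have hbp_lt : ∀ j : ℕ, 1 ≤ j → j < n → bp1 p f k (μ + (j : ZMod f)) = (p : ℤ) - 1 := by
    intro j h1 h2
    have hnext : k (μ + (j : ZMod f) + 1) = 1 := by
      have hc : μ + ((j : ℕ) : ZMod f) + 1 = μ + ((j + 1 : ℕ) : ZMod f) := by push_cast; ring
      rw [hc]
      exact hrun (j + 1) (by omega) (by omega)
    unfold bp1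
    rw [if_pos (hrun j h1 (by omega)), if_pos hnext]
  have hbp_n : bp1 p f k (μ + (n : ZMod f)) = (p : ℤ) := by
    unfold bp1
    rw [if_pos (hrun n hn le_rfl), if_neg hend]
  have hδrun : ∀ j : ℕ, 1 ≤ j → j ≤ n → ∀ B : ℤ, bp1 p f k (μ + (j : ZMod f)) = B →
      δ (σ0 + (j : ZMod (2 * f))) =
        (if σ0 + (j : ZMod (2 * f)) ∈ J' then B else 0) -
        (if σ0 + (j : ZMod (2 * f)) ∈ Jμ then B else 0) := by
    intro j h1 h2 B hB
    rw [hδval, hπadd j]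
    have hb1 : bmu1 p f k μ (μ + (j : ZMod f)) = bp1 p f k (μ + (j : ZMod f)) := by
      unfold bmu1; rw [if_neg (hneμ j h1 h2)]
    have hb2 : bmu2 f μ (μ + (j : ZMod f)) = 0 := by
      unfold bmu2; rw [if_neg (hneμ j h1 h2)]
    rw [hb1, hb2, hB]
  -- value at σ0
  have hδσ0 : δ σ0 = (if σ0 ∈ J' then k μ - 2 else 0) -
      (if σ0 ∈ Jμ then k μ - 1 else -1) := by
    rw [hδval, hπ, hbpμ, hbmu1μ, hbmu2μ]
  have hδr0 : δ σ0 = (p : ℤ) * a (σ0 - 1) - a σ0 := by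
    have h := hrec (σ0 - 1)
    rwa [sub_add_cancel] at h
  have ha0in : σ0 ∈ J' → a σ0 = 1 := by
    intro hJ
    rw [if_pos hJ] at hδσ0
    have hx := hav (σ0 - 1)
    have hy := hav σ0
    by_cases hJ2 : σ0 ∈ Jμ
    · rw [if_pos hJ2] at hδσ0
      rcases hx with h | h | h <;> rw [h] at hδr0 <;> omega
    · rw [if_neg hJ2] at hδσ0
      rcases hx with h | h | h <;> rw [h] at hδr0 <;> omega
  have ha0out : σ0 ∉ J' → a σ0 = -1 := by
    intro hJ
    rw [if_neg hJ] at hδσ0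
    have hx := hav (σ0 - 1)
    have hy := hav σ0
    by_cases hJ2 : σ0 ∈ Jμ
    · rw [if_pos hJ2] at hδσ0
      rcases hx with h | h | h <;> rw [h] at hδr0 <;> omega
    · rw [if_neg hJ2] at hδσ0
      rcases hx with h | h | h <;> rw [h] at hδr0 <;> omega
  have haS : a σ0 = 1 ∨ a σ0 = -1 := by
    by_cases hJ : σ0 ∈ J'
    · exact Or.inl (ha0in hJ)
    · exact Or.inr (ha0out hJ)
  -- the chain along the run
  have hchain : ∀ j : ℕ, j ≤ n →
      (j < n → a (σ0 + (j : ZMod (2 * f))) = a σ0) ∧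
      (1 ≤ j → ((σ0 + (j : ZMod (2 * f)) ∈ J') ↔ a σ0 = 1)) := by
    intro j
    induction j with
    | zero =>
      intro _
      refine ⟨fun _ => by norm_num, fun h => absurd h (by omega)⟩
    | succ j ih =>
      intro hj1
      have hprev : a (σ0 + (j : ZMod (2 * f))) = a σ0 := (ih (by omega)).1 (by omega)
      have hr := hrec (σ0 + (j : ZMod (2 * f)))
      have hposc : σ0 + ((j : ℕ) : ZMod (2 * f)) + 1 = σ0 + ((j + 1 : ℕ) : ZMod (2 * f)) := by
        push_cast; ring
      rw [hposc, hprev] at hr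
      have hy := hav (σ0 + ((j + 1 : ℕ) : ZMod (2 * f)))
      by_cases hlt : j + 1 < n
      · have hδv := hδrun (j + 1) (by omega) hj1 ((p : ℤ) - 1) (hbp_lt (j + 1) (by omega) hlt)
        have hKey : ((σ0 + ((j + 1 : ℕ) : ZMod (2 * f)) ∈ J') ↔ a σ0 = 1) ∧
            a (σ0 + ((j + 1 : ℕ) : ZMod (2 * f))) = a σ0 := by
          by_cases hm : σ0 + ((j + 1 : ℕ) : ZMod (2 * f)) ∈ J' <;>
            by_cases hm2 : σ0 + ((j + 1 : ℕ) : ZMod (2 * f)) ∈ Jμ <;>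
            simp only [hm, hm2, if_true, if_false, if_pos, if_neg, not_false_iff] at hδv <;>
            rcases haS with h | h <;>
            rw [h] at hr <;>
            refine ⟨?_, ?_⟩ <;>
            first
              | exact iff_of_true hm (by omega)
              | exact iff_of_false hm (by omega)
              | omega
        exact ⟨fun _ => hKey.2, fun _ => hKey.1⟩
      · have hjn : j + 1 = n := by omega
        have hδv := hδrun (j + 1) (by omega) hj1 (p : ℤ) (by rw [hjn]; exact hbp_n)
        have hKey : (σ0 + ((j + 1 : ℕ) : ZMod (2 * f)) ∈ J') ↔ a σ0 = 1 := by
          by_cases hm : σ0 + ((j + 1 : ℕ) : ZMod (2 * f)) ∈ J' <;>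
            by_cases hm2 : σ0 + ((j + 1 : ℕ) : ZMod (2 * f)) ∈ Jμ <;>
            simp only [hm, hm2, if_true, if_false, if_pos, if_neg, not_false_iff] at hδv <;>
            rcases haS with h | h <;>
            rw [h] at hr <;>
            first
              | exact iff_of_true hm (by omega)
              | exact iff_of_false hm (by omega)
        exact ⟨fun h => absurd h hlt, fun _ => hKey⟩
  by_cases hJ : σ0 ∈ J'
  · left
    refine ⟨hJ, fun j h1 h2 => ?_⟩
    exact ((hchain j h2).2 h1).mpr (ha0in hJ)
  · right
    refine ⟨hJ, fun j h1 h2 => ?_⟩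
    intro hmem
    have h := ((hchain j h2).2 h1).mp hmem
    have h2' := ha0out hJ
    omega
end
end

section
/- Suppose J′ is a balanced subset of ℤ/2fℤ and, for each ν ∈ M̃, J^ν is a balanced subset of ℤ/2fℤ such that Σ₂(s(b′,J′)) ≡ Σ₂(s(b^ν,J^ν)) (mod p^{2f} − 1) and Σ₂(t(b′,J′)) ≡ Σ₂(t(b^ν,J^ν)) (mod p^{2f} − 1) for every ν ∈ M̃. Then there exists J ⊆ ℤ/2fℤ such that σ ∈ J ⟺ σ ∈ J′ for all σ with π(σ) ∉ J₀, and Σ₂(s(b,J)) ≡ Σ₂(s(b′,J′)) (mod p^{2f} − 1) and Σ₂(t(b,J)) ≡ Σ₂(t(b′,J′)) (mod p^{2f} − 1). -/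
open scoped Classical
noncomputable section

lemma geo_bound (p : ℤ) (hp : 3 ≤ p) : ∀ m : ℕ,
    2 * ∑ j ∈ Finset.range m, p ^ (j + 1) ≤ 3 * (p ^ m - 1) := by
  intro m
  induction m with
  | zero => simp
  | succ m ih =>
    rw [Finset.sum_range_succ]
    have h1 : (1:ℤ) ≤ p ^ m := one_le_pow₀ (by omega)
    have h2 : 3 * p ^ m ≤ p ^ (m+1) := by
      rw [pow_succ]; nlinarith
    nlinarith

lemma chain_exists (p n : ℕ) (hp : 3 ≤ (p : ℤ)) (hn : 1 ≤ n) (E : ZMod n → ℤ)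
    (hE : ∀ σ, |E σ| ≤ (p : ℤ))
    (hdvd : ((p : ℤ) ^ n - 1) ∣ ∑ σ ∈ Finset.range n, E (σ : ZMod n) * (p : ℤ) ^ (n - 1 - σ)) :
    ∃ U : ZMod n → ℤ, (∀ σ, |U σ| ≤ 1) ∧ ∀ σ : ZMod n, E σ = (p : ℤ) * U (σ - 1) - U σ := by
  haveI : NeZero n := ⟨by omega⟩
  set P : ℤ := (p : ℤ) with hP
  obtain ⟨ε, hε⟩ := hdvd
  set V : ℤ := ∑ σ ∈ Finset.range n, E (σ : ZMod n) * P ^ (n - 1 - σ) with hV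
  have hPpow : ∀ m : ℕ, (1:ℤ) ≤ P ^ m := fun m => one_le_pow₀ (by omega)
  have hVbound : 2 * |V| ≤ 3 * (P ^ n - 1) := by
    have h1 : |V| ≤ ∑ σ ∈ Finset.range n, P ^ ((n - 1 - σ) + 1) := by
      refine (Finset.abs_sum_le_sum_abs _ _).trans (Finset.sum_le_sum fun σ _ => ?_)
      rw [abs_mul, abs_pow, abs_of_nonneg (by omega : (0:ℤ) ≤ P), pow_succ, mul_comm (P ^ _) P]
      exact mul_le_mul_of_nonneg_right (hE _) (pow_nonneg (by omega) _)
    have h2 : ∑ σ ∈ Finset.range n, P ^ ((n - 1 - σ) + 1) = ∑ j ∈ Finset.range n, P ^ (j + 1) :=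
      Finset.sum_range_reflect (fun j => P ^ (j + 1)) n
    have := geo_bound P hp n
    omega
  have hNpos : (0:ℤ) < P ^ n - 1 := by
    have h1 : P ^ 1 ≤ P ^ n := pow_le_pow_right₀ (by omega) hn
    have h2 : P ^ 1 = P := pow_one P
    omega
  have hε1 : |ε| ≤ 1 := by
    have h1 : |V| = (P ^ n - 1) * |ε| := by rw [hε, abs_mul, abs_of_pos hNpos]
    nlinarith [abs_nonneg ε]
  -- digits in ascending order
  set c : ℕ → ℤ := fun m => E (((n - 1 - m : ℕ) : ZMod n)) with hc
  have hcV : ∑ m ∈ Finset.range n, c m * P ^ m = V := by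
    rw [hV, ← Finset.sum_range_reflect]
    refine Finset.sum_congr rfl fun σ hσ => ?_
    have hσn : σ < n := Finset.mem_range.mp hσ
    have : n - 1 - (n - 1 - σ) = σ := by omega
    simp only [hc, this]
  set R : ℕ → ℤ := fun m => ε + ∑ m' ∈ Finset.range m, c m' * P ^ m' with hR
  have hRalt : ∀ m, m ≤ n → R m = ε * P ^ n - ∑ m' ∈ Finset.Ico m n, c m' * P ^ m' := by
    intro m hm
    have hsplit : ∑ m' ∈ Finset.range m, c m' * P ^ m' + ∑ m' ∈ Finset.Ico m n, c m' * P ^ m'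
        = ∑ m' ∈ Finset.range n, c m' * P ^ m' := by
      simp only [Finset.range_eq_Ico]
      exact Finset.sum_Ico_consecutive _ (Nat.zero_le m) hm
    have h5 : R m + ∑ m' ∈ Finset.Ico m n, c m' * P ^ m' = ε + V := by
      show ε + ∑ m' ∈ Finset.range m, c m' * P ^ m' + ∑ m' ∈ Finset.Ico m n, c m' * P ^ m' = ε + V
      rw [← hcV]; linarith [hsplit]
    rw [hε] at h5; linarith
  have hdvdR : ∀ m, m ≤ n → P ^ m ∣ R m := by
    intro m hm
    rw [hRalt m hm]
    refine dvd_sub (Dvd.dvd.mul_left (pow_dvd_pow P hm) ε) (Finset.dvd_sum fun m' hm' => ?_)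
    exact Dvd.dvd.mul_left (pow_dvd_pow P (Finset.mem_Ico.mp hm').1) _
  set u : ℕ → ℤ := fun m => R m / P ^ m with hu
  have hum : ∀ m, m ≤ n → P ^ m * u m = R m := fun m hm => Int.mul_ediv_cancel' (hdvdR m hm)
  have hu0 : u 0 = ε := by simp [hu, hR]
  have hunn : u n = ε := by
    have h1 := hum n le_rfl
    have h2 : R n = ε * P ^ n := by rw [hRalt n le_rfl]; simp
    have h3 : P ^ n ≠ 0 := by positivity
    have h4 := h1.trans h2
    exact mul_left_cancel₀ h3 (by linarith)
  have hrel : ∀ m, m < n → c m = P * u (m + 1) - u m := by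
    intro m hm
    have h1 := hum m (by omega)
    have h2 := hum (m + 1) (by omega)
    have h3 : R (m + 1) = R m + c m * P ^ m := by
      rw [hR]; simp [Finset.sum_range_succ]; ring
    have h4 : P ^ (m+1) * u (m+1) = P ^ m * u m + c m * P ^ m := by rw [h2, h3, h1]
    have h5 : P ^ (m+1) = P ^ m * P := pow_succ P m
    have h6 : P ^ m ≠ 0 := by positivity
    have h7 : P ^ m * (P * u (m+1)) = P ^ m * (u m + c m) := by rw [← mul_assoc, ← h5]; linarith
    have := mul_left_cancel₀ h6 h7
    linarith
  have hubound : ∀ m, m ≤ n → |u m| ≤ 1 := by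
    intro m hm
    have h1 : |R m| ≤ 1 + ∑ m' ∈ Finset.range m, P ^ (m' + 1) := by
      rw [hR]
      refine (abs_add_le _ _).trans ?_
      refine add_le_add hε1 ((Finset.abs_sum_le_sum_abs _ _).trans (Finset.sum_le_sum fun j _ => ?_))
      rw [abs_mul, abs_pow, abs_of_nonneg (by omega : (0:ℤ) ≤ P), pow_succ, mul_comm (P ^ _) P]
      exact mul_le_mul_of_nonneg_right (hE _) (pow_nonneg (by omega) _)
    have h2 := geo_bound P hp m
    have h3 : P ^ m * |u m| = |R m| := by
      rw [← hum m hm, abs_mul, abs_pow, abs_of_nonneg (by omega : (0:ℤ) ≤ P)]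
    have h4 := hPpow m
    nlinarith [abs_nonneg (u m)]
  refine ⟨fun σ => u (n - 1 - σ.val), fun σ => hubound _ (by omega), fun σ => ?_⟩
  show E σ = P * u (n - 1 - (σ - 1).val) - u (n - 1 - σ.val)
  have hval : σ.val < n := ZMod.val_lt σ
  have hσcast : ((σ.val : ℕ) : ZMod n) = σ := by
    rw [ZMod.natCast_val, ZMod.cast_id]
  by_cases h0 : σ.val = 0
  · have hσ0 : σ = 0 := by rw [← hσcast, h0, Nat.cast_zero]
    have hm1 : σ - 1 = ((n - 1 : ℕ) : ZMod n) := by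
      rw [hσ0, Nat.cast_sub hn, ZMod.natCast_self, Nat.cast_one]
    have hv1 : (σ - 1).val = n - 1 := by rw [hm1, ZMod.val_cast_of_lt (by omega)]
    have h1 := hrel (n - 1) (by omega)
    have h2 : c (n - 1) = E σ := by
      simp only [hc]
      have e0 : n - 1 - (n - 1) = 0 := by omega
      rw [e0, hσ0]
      simp
    have h3 : n - 1 + 1 = n := by omega
    have h4 : u n = u 0 := hunn.trans hu0.symm
    rw [h2, h3, h4] at h1
    rw [hv1, h0]
    have e1 : n - 1 - (n - 1) = 0 := by omega
    have e2 : n - 1 - 0 = n - 1 := by omega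
    rw [e1, e2]
    exact h1
  · have hm1 : σ - 1 = ((σ.val - 1 : ℕ) : ZMod n) := by
      conv_lhs => rw [← hσcast]
      rw [Nat.cast_sub (by omega), Nat.cast_one]
    have hv1 : (σ - 1).val = σ.val - 1 := by rw [hm1, ZMod.val_cast_of_lt (by omega)]
    have h1 := hrel (n - 1 - σ.val) (by omega)
    have h2 : c (n - 1 - σ.val) = E σ := by
      simp only [hc]
      congr 1
      conv_rhs => rw [← hσcast]
      congr 1
      omega
    rw [h2] at h1
    rw [hv1]
    have e1 : n - 1 - (σ.val - 1) = n - 1 - σ.val + 1 := by omega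
    rw [e1]
    exact h1



lemma pi2_addh (f : ℕ) (a b : ZMod (2*f)) : pi2 f (a + b) = pi2 f a + pi2 f b := by
  unfold pi2; exact map_add _ a b

lemma pi2_subh (f : ℕ) (a b : ZMod (2*f)) : pi2 f (a - b) = pi2 f a - pi2 f b := by
  unfold pi2; exact map_sub _ a b

lemma pi2_natCasth (f m : ℕ) : pi2 f ((m : ℕ) : ZMod (2*f)) = (m : ZMod f) := by
  unfold pi2; exact map_natCast _ m

lemma pi2_oneh (f : ℕ) : pi2 f 1 = 1 := by
  unfold pi2; exact map_one _

lemma pi2_add_nat (f : ℕ) (σ : ZMod (2*f)) (m : ℕ) :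
    pi2 f (σ + (m : ZMod (2*f))) = pi2 f σ + (m : ZMod f) := by
  rw [pi2_addh, pi2_natCasth]


/-- Proposition 7.4 of the paper (irreducible case): if a balanced `J′` is congruent to
balanced subsets `J^ν` for all `ν ∈ M̃`, then there is a subset `J ⊆ ℤ/2fℤ` agreeing with
`J′` above `Σ ∖ J₀` and realising the irregular weight congruences mod `p^{2f} − 1`. -/
theorem stmt19 (p f : ℕ) (hp : p.Prime) (hodd : Odd p) (hf : 1 ≤ f)
    (k : ZMod f → ℤ)
    (hk : ∀ i, 1 ≤ k i ∧ k i ≤ (p : ℤ))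
    (hone : ∃ i, k i = 1) (hnotone : ∃ i, k i ≠ 1)
    (h21 : ∀ i, ¬(k i = 2 ∧ k (i + 1) = 1))
    (J' : Set (ZMod (2 * f))) (hbal' : BalancedSet f J')
    (Jnu : ZMod f → Set (ZMod (2 * f)))
    (hbalν : ∀ ν, (k ν ≠ 1 ∧ k (ν + 1) = 1) → BalancedSet f (Jnu ν))
    (hs : ∀ ν, (k ν ≠ 1 ∧ k (ν + 1) = 1) →
      Int.ModEq ((p : ℤ) ^ (2 * f) - 1)
        (Sig2 p f (sW2 f (bp1 p f k) (zero2 f) J'))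
        (Sig2 p f (sW2 f (bmu1 p f k ν) (bmu2 f ν) (Jnu ν))))
    (ht : ∀ ν, (k ν ≠ 1 ∧ k (ν + 1) = 1) →
      Int.ModEq ((p : ℤ) ^ (2 * f) - 1)
        (Sig2 p f (tW2 f (bp1 p f k) (zero2 f) J'))
        (Sig2 p f (tW2 f (bmu1 p f k ν) (bmu2 f ν) (Jnu ν)))) :
    ∃ J : Set (ZMod (2 * f)),
      (∀ σ : ZMod (2 * f), k (pi2 f σ) ≠ 1 → (σ ∈ J ↔ σ ∈ J')) ∧
      Int.ModEq ((p : ℤ) ^ (2 * f) - 1)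
        (Sig2 p f (sW2 f (b1 f k) (zero2 f) J))
        (Sig2 p f (sW2 f (bp1 p f k) (zero2 f) J')) ∧
      Int.ModEq ((p : ℤ) ^ (2 * f) - 1)
        (Sig2 p f (tW2 f (b1 f k) (zero2 f) J))
        (Sig2 p f (tW2 f (bp1 p f k) (zero2 f) J')) := by
  classical
  haveI hf2 : NeZero (2*f) := ⟨by omega⟩
  haveI hf1 : NeZero f := ⟨by omega⟩
  have hp3 : 3 ≤ (p:ℤ) := by
    have h2 := hp.two_le
    have hne2 : p ≠ 2 := by
      rintro rfl
      rw [Nat.odd_iff] at hodd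
      omega
    exact_mod_cast (by omega : 3 ≤ p)
  -- the run-constancy lemma
  have hrun : ∀ (t : ℕ) (σs : ZMod (2*f)), k (pi2 f σs) ≠ 1 →
      (∀ j : ℕ, 1 ≤ j → j ≤ t → k (pi2 f σs + (j : ZMod f)) = 1) →
      ((σs + (t : ZMod (2*f)) ∈ J') ↔ σs ∈ J') := by
    intro t σs hν1 hkj
    rcases Nat.eq_zero_or_pos t with rfl | ht
    · simp
    set ν := pi2 f σs with hν
    have hν2 : k (ν + 1) = 1 := by
      have := hkj 1 le_rfl ht
      rwa [Nat.cast_one] at this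
    have hν3 : k ν ≠ 2 := fun h => h21 ν ⟨h, hν2⟩
    obtain ⟨hkν1, hkν2⟩ := hk ν
    have hsν := hs ν ⟨hν1, hν2⟩
    set E : ZMod (2*f) → ℤ := fun σ =>
      sW2 f (bp1 p f k) (zero2 f) J' σ - sW2 f (bmu1 p f k ν) (bmu2 f ν) (Jnu ν) σ with hE
    have hEb : ∀ σ, |E σ| ≤ (p:ℤ) := by
      intro σ
      rw [abs_le]
      by_cases hσν : pi2 f σ = ν
      · simp only [hE, sW2, bp1, bmu1, bmu2, zero2, hσν]
        constructor <;> split_ifs <;> omega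
      · obtain ⟨h1, h2⟩ := hk (pi2 f σ)
        obtain ⟨h3, h4⟩ := hk (pi2 f σ + 1)
        simp only [hE, sW2, bp1, bmu1, bmu2, zero2, hσν, if_false]
        constructor <;> split_ifs <;> omega
    have hdvd : ((p:ℤ)^(2*f) - 1) ∣
        ∑ σ ∈ Finset.range (2*f), E (σ : ZMod (2*f)) * (p:ℤ)^(2*f-1-σ) := by
      have h1 : ∑ σ ∈ Finset.range (2*f), E (σ:ZMod (2*f)) * (p:ℤ)^(2*f-1-σ)
          = Sig2 p f (sW2 f (bp1 p f k) (zero2 f) J')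
            - Sig2 p f (sW2 f (bmu1 p f k ν) (bmu2 f ν) (Jnu ν)) := by
        rw [Sig2, Sig2, ← Finset.sum_sub_distrib]
        exact Finset.sum_congr rfl fun σ _ => by rw [hE]; ring
      rw [h1]
      exact Int.ModEq.dvd hsν.symm
    obtain ⟨U, hUb, hUrel⟩ := chain_exists p (2*f) hp3 (by omega) E hEb hdvd
    -- head fact
    have hhead : U σs = (if σs ∈ J' then 1 else -1) := by
      have hrel := hUrel σs
      have hb : bp1 p f k ν = k ν - 2 := by
        simp only [bp1]
        rw [if_neg hν1, if_pos hν2]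
      have hb1 : bmu1 p f k ν ν = k ν - 1 := by simp [bmu1]
      have hb2 : bmu2 f ν ν = -1 := by simp [bmu2]
      simp only [hE, sW2, zero2, ← hν, hb, hb1, hb2] at hrel
      have hU1 := abs_le.mp (hUb σs)
      have hU2 := abs_le.mp (hUb (σs - 1))
      have hcase : U (σs - 1) = -1 ∨ U (σs - 1) = 0 ∨ U (σs - 1) = 1 := by omega
      by_cases hJ : σs ∈ J' <;> by_cases hJn : σs ∈ Jnu ν <;>
        simp only [hJ, hJn, if_true, if_false] at hrel ⊢ <;>
        rcases hcase with h' | h' | h' <;> rw [h'] at hrel <;> omega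
    -- tail fact
    have htail : ∀ σ : ZMod (2*f), k (pi2 f σ) = 1 →
        (U (σ - 1) = 1 ∨ U (σ - 1) = -1) →
        ((U (σ - 1) = 1 → σ ∈ J') ∧ (U (σ - 1) = -1 → σ ∉ J') ∧
          (k (pi2 f σ + 1) = 1 → U σ = U (σ - 1))) := by
      intro σ hk1 hW
      have hrel := hUrel σ
      have hne : pi2 f σ ≠ ν := fun h => hν1 (h ▸ hk1)
      have hb1 : bmu1 p f k ν (pi2 f σ) = bp1 p f k (pi2 f σ) := by
        simp [bmu1, hne]
      have hb2 : bmu2 f ν (pi2 f σ) = 0 := by simp [bmu2, hne]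
      have hbp : bp1 p f k (pi2 f σ)
          = (if k (pi2 f σ + 1) = 1 then (p:ℤ) - 1 else (p:ℤ)) := by
        simp only [bp1]
        rw [if_pos hk1]
      simp only [hE, sW2, zero2, hb1, hb2, hbp] at hrel
      have hU1 := abs_le.mp (hUb σ)
      by_cases h2 : k (pi2 f σ + 1) = 1 <;>
        by_cases hJ : σ ∈ J' <;> by_cases hJn : σ ∈ Jnu ν <;>
        simp only [h2, hJ, hJn, if_true, if_false] at hrel <;>
        rcases hW with h' | h' <;> rw [h'] at hrel <;>
        refine ⟨fun h'' => ?_, fun h'' => ?_, fun h'' => ?_⟩ <;>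
        first
          | exact hJ
          | exact absurd h'' h2
          | omega
          | (exfalso; omega)
    -- the induction along the run
    have hU1or : U σs = 1 ∨ U σs = -1 := by
      rw [hhead]
      by_cases hJ : σs ∈ J' <;> simp [hJ]
    have hmain : ∀ j : ℕ, j ≤ t →
        (1 ≤ j → ((σs + (j : ZMod (2*f)) ∈ J') ↔ U σs = 1)) ∧
        (k (pi2 f σs + ((j+1 : ℕ) : ZMod f)) = 1 → U (σs + (j : ZMod (2*f))) = U σs) := by
      intro j
      induction j with
      | zero =>
        intro _
        constructor
        · intro h; omega
        · intro _; norm_num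
      | succ j ih =>
        intro hjt
        have ihh := ih (by omega)
        have hknext : k (pi2 f σs + ((j+1 : ℕ) : ZMod f)) = 1 := hkj (j+1) (by omega) hjt
        have hWval : U (σs + (j : ZMod (2*f))) = U σs := ihh.2 hknext
        set σc := σs + ((j+1 : ℕ) : ZMod (2*f)) with hσc
        have hσm1 : σc - 1 = σs + (j : ZMod (2*f)) := by
          rw [hσc]; push_cast; ring
        have hπc : k (pi2 f σc) = 1 := by
          rw [hσc, pi2_add_nat, ← hν]
          exact hknext
        have hWor : U (σc - 1) = 1 ∨ U (σc - 1) = -1 := by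
          rw [hσm1, hWval]; exact hU1or
        have htl := htail σc hπc hWor
        constructor
        · intro _
          constructor
          · intro hmem
            rcases hU1or with h | h
            · exact h
            · exfalso
              exact (htl.2.1 (by rw [hσm1, hWval]; exact h)) hmem
          · intro h1
            exact htl.1 (by rw [hσm1, hWval]; exact h1)
        · intro hknn
          have he : pi2 f σc + 1 = pi2 f σs + ((j+1+1 : ℕ) : ZMod f) := by
            rw [hσc, pi2_add_nat]
            push_cast
            ring
          have := htl.2.2 (by rw [he]; exact hknn)
          rw [hσm1, hWval] at this
          exact this
    have hfin := (hmain t le_rfl).1 ht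
    rw [hfin, hhead]
    by_cases hJ : σs ∈ J' <;> simp [hJ]
  -- membership of J' is constant along runs of k-value 1, in consecutive ℤ/2f positions
  have hRp : ∀ σ : ZMod (2*f), k (pi2 f (σ + 1)) = 1 → ((σ + 1 ∈ J') ↔ σ ∈ J') := by
    intro σ h1
    obtain ⟨i0, hi0⟩ := hnotone
    have hex : ∃ m : ℕ, k (pi2 f σ - (m : ZMod f)) ≠ 1 := by
      refine ⟨(pi2 f σ - i0).val, ?_⟩
      rw [ZMod.natCast_val, ZMod.cast_id]
      simpa [sub_sub_cancel] using hi0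
    have hfind := Nat.find_spec hex
    set n0 := Nat.find hex with hn0
    have hmin : ∀ m, m < n0 → k (pi2 f σ - (m : ZMod f)) = 1 := fun m hm =>
      not_not.mp (Nat.find_min hex hm)
    set σs := σ - (n0 : ZMod (2*f)) with hσs
    have hπs : pi2 f σs = pi2 f σ - (n0 : ZMod f) := by
      rw [hσs, pi2_subh, pi2_natCasth]
    have hcond : ∀ tt : ℕ, tt ≤ n0 + 1 → ∀ j : ℕ, 1 ≤ j → j ≤ tt →
        k (pi2 f σs + (j : ZMod f)) = 1 := by
      intro tt htt j hj1 hj2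
      rw [hπs]
      rcases Nat.lt_or_ge j (n0+1) with hlt | hge
      · have he : pi2 f σ - (n0 : ZMod f) + (j : ZMod f) = pi2 f σ - ((n0 - j : ℕ) : ZMod f) := by
          rw [Nat.cast_sub (by omega : j ≤ n0)]
          ring
        rw [he]
        exact hmin (n0 - j) (by omega)
      · have hj : j = n0 + 1 := by omega
        subst hj
        have he : pi2 f σ - (n0 : ZMod f) + ((n0 + 1 : ℕ) : ZMod f) = pi2 f (σ + 1) := by
          rw [pi2_addh, pi2_oneh]
          push_cast
          ring
        rw [he]
        exact h1
    have h2 : (σs + ((n0+1 : ℕ) : ZMod (2*f)) ∈ J') ↔ σs ∈ J' :=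
      hrun (n0+1) σs (by rw [hπs]; exact hfind) (hcond (n0+1) le_rfl)
    have h3 : (σs + ((n0 : ℕ) : ZMod (2*f)) ∈ J') ↔ σs ∈ J' :=
      hrun n0 σs (by rw [hπs]; exact hfind) (hcond n0 (by omega))
    have e2 : σs + ((n0+1 : ℕ) : ZMod (2*f)) = σ + 1 := by rw [hσs]; push_cast; ring
    have e3 : σs + ((n0 : ℕ) : ZMod (2*f)) = σ := by rw [hσs]; ring
    rw [e2] at h2
    rw [e3] at h3
    exact h2.trans h3.symm
  -- telescoping lemma
  have hkey : ∀ S : Set (ZMod (2*f)),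
      (∀ σ : ZMod (2*f), k (pi2 f (σ + 1)) = 1 → ((σ + 1 ∈ S) ↔ σ ∈ S)) →
      Int.ModEq ((p:ℤ)^(2*f) - 1) (Sig2 p f (sW2 f (b1 f k) (zero2 f) S))
        (Sig2 p f (sW2 f (bp1 p f k) (zero2 f) S)) := by
    intro S hS
    set g : ZMod (2*f) → ℤ := fun σ => if σ ∈ S ∧ k (pi2 f σ) = 1 then 1 else 0 with hg
    have hpoint : ∀ σ : ZMod (2*f),
        sW2 f (b1 f k) (zero2 f) S σ - sW2 f (bp1 p f k) (zero2 f) S σ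
          = g (σ + 1) - (p:ℤ) * g σ := by
      intro σ
      have hpi : pi2 f (σ + 1) = pi2 f σ + 1 := by rw [pi2_addh, pi2_oneh]
      simp only [hg, sW2, zero2, b1, bp1, hpi]
      by_cases h2 : k (pi2 f σ + 1) = 1
      · have hS2 : ((σ + 1 ∈ S)) = (σ ∈ S) := propext (hS σ (by rw [hpi]; exact h2))
        by_cases hmem : σ ∈ S <;> by_cases h1 : k (pi2 f σ) = 1 <;>
          simp [hmem, h1, h2, hS2] <;> omega
      · by_cases hmem : σ ∈ S <;> by_cases h1 : k (pi2 f σ) = 1 <;>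
          simp [hmem, h1, h2] <;> omega
    have hsum : Sig2 p f (sW2 f (b1 f k) (zero2 f) S)
        - Sig2 p f (sW2 f (bp1 p f k) (zero2 f) S) = - g 0 * ((p:ℤ)^(2*f) - 1) := by
      rw [Sig2, Sig2, ← Finset.sum_sub_distrib]
      have h1 : ∀ σ ∈ Finset.range (2*f),
          sW2 f (b1 f k) (zero2 f) S (σ : ZMod (2*f)) * (p:ℤ)^(2*f-1-σ)
            - sW2 f (bp1 p f k) (zero2 f) S (σ : ZMod (2*f)) * (p:ℤ)^(2*f-1-σ)
          = (g ((σ:ZMod (2*f)) + 1) - (p:ℤ) * g (σ : ZMod (2*f))) * (p:ℤ)^(2*f-1-σ) :=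
        fun σ _ => by rw [← sub_mul, hpoint]
      rw [Finset.sum_congr rfl h1]
      have hsplit : ∑ σ ∈ Finset.range (2*f),
            (g ((σ:ZMod (2*f)) + 1) - (p:ℤ) * g (σ:ZMod (2*f))) * (p:ℤ)^(2*f-1-σ)
          = (∑ σ ∈ Finset.range (2*f), g ((σ:ZMod (2*f)) + 1) * (p:ℤ)^(2*f-1-σ))
            - (p:ℤ) * ∑ σ ∈ Finset.range (2*f), g (σ:ZMod (2*f)) * (p:ℤ)^(2*f-1-σ) := by
        rw [Finset.mul_sum, ← Finset.sum_sub_distrib]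
        exact Finset.sum_congr rfl fun σ _ => by ring
      rw [hsplit]
      have hS2eq : ∑ σ ∈ Finset.range (2*f), g (σ:ZMod (2*f)) * (p:ℤ)^(2*f-σ)
          = (p:ℤ) * ∑ σ ∈ Finset.range (2*f), g (σ:ZMod (2*f)) * (p:ℤ)^(2*f-1-σ) := by
        rw [Finset.mul_sum]
        refine Finset.sum_congr rfl fun σ hσ => ?_
        have hσ2 : σ < 2*f := Finset.mem_range.mp hσ
        have he : 2*f - σ = (2*f-1-σ) + 1 := by omega
        rw [he, pow_succ]; ring
      have hS1eq : (∑ σ ∈ Finset.range (2*f), g ((σ:ZMod (2*f)) + 1) * (p:ℤ)^(2*f-1-σ))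
          = (∑ σ ∈ Finset.range (2*f), g (σ:ZMod (2*f)) * (p:ℤ)^(2*f-σ))
            - g 0 * ((p:ℤ)^(2*f) - 1) := by
        have hrg : Finset.range (2*f) = Finset.range ((2*f-1)+1) := by congr 1; omega
        rw [hrg, Finset.sum_range_succ, Finset.sum_range_succ']
        have hc0 : ((2*f-1 : ℕ) : ZMod (2*f)) + 1 = 0 := by
          have h' : (((2*f-1 : ℕ) : ZMod (2*f)) + 1) = (((2*f-1) + 1 : ℕ) : ZMod (2*f)) := by
            push_cast; ring
          rw [h']
          have h'' : (2*f-1) + 1 = 2*f := by omega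
          rw [h'', ZMod.natCast_self]
        have hlast : g (((2*f-1 : ℕ) : ZMod (2*f)) + 1) * (p:ℤ)^(2*f - 1 - (2*f-1)) = g 0 := by
          rw [hc0]
          have h' : 2*f - 1 - (2*f-1) = 0 := by omega
          rw [h', pow_zero, mul_one]
        rw [hlast]
        have hfirst : g ((0:ℕ) : ZMod (2*f)) * (p:ℤ)^(2*f - 0) = g 0 * (p:ℤ)^(2*f) := by
          rw [Nat.cast_zero, Nat.sub_zero]
        rw [hfirst]
        have hterms : ∀ i ∈ Finset.range (2*f-1),
            g ((i:ZMod (2*f)) + 1) * (p:ℤ)^(2*f - 1 - i)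
            = g (((i+1 : ℕ):ZMod (2*f))) * (p:ℤ)^(2*f - (i+1)) := by
          intro i hi
          have hi2 : i < 2*f-1 := Finset.mem_range.mp hi
          have hcast : (((i+1 : ℕ)):ZMod (2*f)) = (i:ZMod (2*f)) + 1 := by push_cast; ring
          have hexp : 2*f - 1 - i = 2*f - (i+1) := by omega
          rw [hcast, hexp]
        rw [Finset.sum_congr rfl hterms]
        ring
      rw [hS1eq, hS2eq]
      ring
    have hdvd : ((p:ℤ)^(2*f) - 1) ∣
        (Sig2 p f (sW2 f (bp1 p f k) (zero2 f) S) - Sig2 p f (sW2 f (b1 f k) (zero2 f) S)) := by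
      refine ⟨g 0, ?_⟩
      have := hsum
      linarith [hsum]
    exact (Int.modEq_iff_dvd.mpr hdvd)

  refine ⟨J', fun σ _ => Iff.rfl, hkey J' hRp, ?_⟩
  have hcRp : ∀ σ : ZMod (2*f), k (pi2 f (σ + 1)) = 1 → ((σ + 1 ∈ J'ᶜ) ↔ σ ∈ J'ᶜ) := by
    intro σ h
    simp only [Set.mem_compl_iff]
    exact not_iff_not.mpr (hRp σ h)
  have ht2 := hkey J'ᶜ hcRp
  have hconv : ∀ c1 c2 : ZMod f → ℤ, tW2 f c1 c2 J' = sW2 f c1 c2 (J'ᶜ) := by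
    intro c1 c2
    funext σ
    simp only [tW2, sW2, Set.mem_compl_iff]
    by_cases h : σ ∈ J' <;> simp [h]
  rw [hconv, hconv]
  exact ht2
end
end
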